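/- arXiv:2410.10402 — 11 statements merged into one kernel-verified Lean document; each statement's English description precedes it below -/
import Mathlib

section
/- The golden ratio α = (1+√5)/2 satisfies ⌊(⌊nα⌋+1)α⌋ = ⌊nα²⌋ + 1 for all integers n. -/
/-!
Write `m = ⌊nφ⌋` and `f = fract (nφ)`. Since `φ² = φ + 1`, we get
`(m + 1)φ = (nφ - f)φ + φ = m + n + (f + (1 - f)φ)`, and `f + (1 - f)φ` is a convex combination
of `1` and `φ` with positive weight on `φ`, so it lies in `(1, φ] ⊆ [1, 2)`. Both sides therefore
equal `m + n + 1`.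
-/

open Real Int

open scoped goldenRatio

lemma floor_fract_add_one_sub_fract_mul_goldenRatio (x : ℝ) :
    ⌊fract x + (1 - fract x) * φ⌋ = 1 := by
  have hf₀ := fract_nonneg x
  have hf₁ := fract_lt_one x
  rw [floor_eq_iff]
  push_cast
  constructor <;> nlinarith [one_lt_goldenRatio, goldenRatio_lt_two]

lemma floor_intCast_mul_goldenRatio_sq (n : ℤ) : ⌊(n : ℝ) * φ ^ 2⌋ = ⌊(n : ℝ) * φ⌋ + n := by
  rw [goldenRatio_sq, mul_add, mul_one, floor_add_intCast]

lemma floor_floor_add_one_mul_goldenRatio (n : ℤ) :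
    ⌊((⌊(n : ℝ) * φ⌋ : ℝ) + 1) * φ⌋ = ⌊(n : ℝ) * φ⌋ + n + 1 := by
  set x := (n : ℝ) * φ
  have hx : ((⌊x⌋ : ℝ) + 1) * φ = (fract x + (1 - fract x) * φ) + ((⌊x⌋ + n : ℤ) : ℝ) := by
    have hxφ : x * φ = x + n := by
      simp only [x, mul_assoc, ← sq, goldenRatio_sq]
      ring
    push_cast
    linear_combination hxφ + (φ - 1) * floor_add_fract x
  rw [hx, floor_add_intCast, floor_fract_add_one_sub_fract_mul_goldenRatio]
  ring

theorem stmt_0 (α : ℝ) (hα : α = (1 + Real.sqrt 5) / 2) :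
    ∀ n : ℤ, ⌊((⌊(n : ℝ) * α⌋ : ℝ) + 1) * α⌋ = ⌊(n : ℝ) * α ^ 2⌋ + 1 := by
  intro n
  rw [show α = φ from hα, floor_intCast_mul_goldenRatio_sq, floor_floor_add_one_mul_goldenRatio]
end

section
/- The golden ratio α = (1+√5)/2 satisfies ⌊⌊nα⌋α⌋ + 1 = ⌊nα²⌋ for all nonzero integers n. -/
theorem stmt_1 (α : ℝ) (hα : α = (1 + Real.sqrt 5) / 2) :
    ∀ n : ℤ, n ≠ 0 → ⌊(⌊(n : ℝ) * α⌋ : ℝ) * α⌋ + 1 = ⌊(n : ℝ) * α ^ 2⌋ := by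
  have h5 : Real.sqrt 5 ^ 2 = 5 := Real.sq_sqrt (by norm_num)
  have hs5 : Irrational (Real.sqrt 5) := by
    simpa using (Nat.prime_five).irrational_sqrt
  have hαi : Irrational α := by
    rw [hα]
    have h1 : Irrational (1 + Real.sqrt 5) := by simpa using hs5.ratCast_add 1
    have h2 := h1.mul_ratCast (q := 1/2) (by norm_num)
    convert h2 using 1
    push_cast
    ring
  have hα2 : α ^ 2 = α + 1 := by rw [hα]; nlinarith [h5]
  have hα1 : 1 < α := by
    rw [hα]; nlinarith [h5, Real.sqrt_nonneg 5]
  have hαlt : α < 2 := by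
    rw [hα]; nlinarith [h5, Real.sqrt_nonneg 5]
  intro n hn
  have hnα : Irrational ((n : ℝ) * α) := hαi.intCast_mul hn
  set x := (n : ℝ) * α with hx
  have hθ1 : Int.fract x < 1 := Int.fract_lt_one x
  have hθ0 : 0 < Int.fract x := Int.fract_pos.mpr (hnα.ne_int _)
  have hfl : (⌊x⌋ : ℝ) = x - Int.fract x := by
    rw [Int.self_sub_fract]
  have hmul : x * α = x + n := by
    have h : x * α = (n : ℝ) * α ^ 2 := by rw [hx]; ring
    rw [h, hα2]; rw [hx]; ring
  have hxval : (⌊x⌋ : ℝ) * α = x + n - Int.fract x * α := by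
    rw [hfl]; nlinarith [hmul]
  have key : ⌊(⌊x⌋ : ℝ) * α⌋ = ⌊x⌋ + n - 1 := by
    rw [Int.floor_eq_iff]
    constructor
    · push_cast
      rw [hxval]
      have : Int.fract x * α < Int.fract x + 1 := by nlinarith
      have hfx : x = ⌊x⌋ + Int.fract x := (Int.floor_add_fract x).symm
      nlinarith
    · push_cast
      rw [hxval]
      have : Int.fract x < Int.fract x * α := by nlinarith
      have hfx : x = ⌊x⌋ + Int.fract x := (Int.floor_add_fract x).symm
      nlinarith
  have hr : (n : ℝ) * α ^ 2 = x + n := by rw [hα2, hx]; ring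
  rw [hr, Int.floor_add_intCast, key]
  ring
end

section
/- A real number α satisfies the identity ⌊⌊nα⌋α⌋ + 1 = ⌊nα²⌋ for all nonzero integers n if and only if α = (1+√5)/2. -/
private noncomputable def ee (α : ℝ) (n : ℤ) : ℝ :=
  (⌊(n : ℝ) * α ^ 2⌋ : ℝ) - α * (⌊(n : ℝ) * α⌋ : ℝ)

private lemma ee_eq (α : ℝ) (n : ℤ) :
    ee α n = α * Int.fract ((n : ℝ) * α) - Int.fract ((n : ℝ) * α ^ 2) := by
  have h1 := Int.floor_add_fract ((n : ℝ) * α)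
  have h2 := Int.floor_add_fract ((n : ℝ) * α ^ 2)
  unfold ee
  linear_combination h2 - α * h1

private lemma fract_add_aux (u v : ℝ) :
    ∃ δ : ℤ, (δ = 0 ∨ δ = 1) ∧ Int.fract (u + v) = Int.fract u + Int.fract v - δ ∧
      ⌊u + v⌋ = ⌊u⌋ + ⌊v⌋ + δ := by
  refine ⟨⌊u + v⌋ - ⌊u⌋ - ⌊v⌋, ?_, ?_, by ring⟩
  · have h1 := Int.floor_add_fract u
    have h2 := Int.floor_add_fract v
    have h3 := Int.floor_add_fract (u + v)
    have b1 := Int.fract_nonneg u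
    have b2 := Int.fract_nonneg v
    have b3 := Int.fract_nonneg (u + v)
    have c1 := Int.fract_lt_one u
    have c2 := Int.fract_lt_one v
    have c3 := Int.fract_lt_one (u + v)
    have hlo : (-1 : ℤ) < ⌊u + v⌋ - ⌊u⌋ - ⌊v⌋ := by
      have h : ((-1 : ℤ) : ℝ) < ((⌊u + v⌋ - ⌊u⌋ - ⌊v⌋ : ℤ) : ℝ) := by push_cast; linarith
      exact_mod_cast h
    have hhi : (⌊u + v⌋ - ⌊u⌋ - ⌊v⌋ : ℤ) < 2 := by
      have : ((⌊u + v⌋ - ⌊u⌋ - ⌊v⌋ : ℤ) : ℝ) < 2 := by push_cast; linarith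
      exact_mod_cast this
    omega
  · have h1 := Int.floor_add_fract u
    have h2 := Int.floor_add_fract v
    have h3 := Int.floor_add_fract (u + v)
    push_cast
    linarith

-- density lemma
private lemma exists_fract_gt {θ : ℝ} (hθ : Irrational θ) {c : ℝ} (hc : c < 1) :
    ∃ j : ℤ, j ≠ 0 ∧ c < Int.fract ((j : ℝ) * θ) := by
  rcases lt_or_ge c 0 with h0 | h0
  · exact ⟨1, one_ne_zero, h0.trans_le (Int.fract_nonneg _)⟩
  rcases AddSubgroup.dense_or_cyclic (AddSubgroup.closure ({1, θ} : Set ℝ)) with hd | ⟨a, ha⟩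
  · obtain ⟨g, hgS, hg1, hg2⟩ := hd.exists_between hc
    rw [SetLike.mem_coe, AddSubgroup.mem_closure_pair] at hgS
    obtain ⟨m, k, hmk⟩ := hgS
    have hg : g = (m : ℝ) + (k : ℝ) * θ := by
      rw [← hmk]; push_cast [zsmul_eq_mul]; ring
    have hk : k ≠ 0 := by
      rintro rfl
      have h1 : (0:ℝ) < (m:ℝ) := by simp at hg; nlinarith
      have h2 : (m:ℝ) < 1 := by simp at hg; nlinarith
      have h1' : 0 < m := by exact_mod_cast h1
      have h2' : m < 1 := by exact_mod_cast h2
      omega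
    refine ⟨k, hk, ?_⟩
    have : Int.fract ((k:ℝ) * θ) = g := by
      rw [show (k:ℝ) * θ = (↑(-m) : ℤ) + g by push_cast; linarith, Int.fract_intCast_add,
        Int.fract_eq_self.2 ⟨le_trans h0 hg1.le, hg2⟩]
    rw [this]; exact hg1
  · exfalso
    have h1 : (1:ℝ) ∈ AddSubgroup.closure ({1, θ} : Set ℝ) :=
      AddSubgroup.subset_closure (Set.mem_insert _ _)
    have h2 : θ ∈ AddSubgroup.closure ({1, θ} : Set ℝ) :=
      AddSubgroup.subset_closure (Set.mem_insert_of_mem _ rfl)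
    rw [ha, AddSubgroup.mem_closure_singleton] at h1 h2
    obtain ⟨p, hp⟩ := h1
    obtain ⟨s, hs⟩ := h2
    have hp0 : p ≠ 0 := by rintro rfl; simp at hp
    refine hθ ⟨(s : ℚ) / (p : ℚ), ?_⟩
    have hpR : ((p:ℝ)) ≠ 0 := Int.cast_ne_zero.2 hp0
    rw [zsmul_eq_mul] at hp hs
    push_cast
    rw [div_eq_iff hpR, ← hs]
    linear_combination (-(s : Real)) * hp

private lemma sqrt5_lt : 2 < Real.sqrt 5 ∧ Real.sqrt 5 < 3 := by
  have h5 : Real.sqrt 5 ^ 2 = 5 := Real.sq_sqrt (by norm_num)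
  have h0 : 0 ≤ Real.sqrt 5 := Real.sqrt_nonneg 5
  constructor <;> nlinarith

private lemma irr_phi : Irrational ((1 + Real.sqrt 5) / 2) := by
  have h5 : Irrational (Real.sqrt 5) := by
    simpa using Nat.Prime.irrational_sqrt (by norm_num : Nat.Prime 5)
  have h1 : Irrational (1 + Real.sqrt 5) := by
    simpa using h5.ratCast_add (q := 1)
  simpa using h1.div_intCast (m := 2) (by norm_num)

private lemma fract_pos_of_irr {β : ℝ} (hβ : Irrational β) {n : ℤ} (hn : n ≠ 0) :
    0 < Int.fract ((n : ℝ) * β) := by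
  rcases (Int.fract_nonneg ((n : ℝ) * β)).lt_or_eq with h | h
  · exact h
  exfalso
  have h2 := Int.self_sub_fract ((n : ℝ) * β)
  rw [← h, sub_zero] at h2
  exact (hβ.intCast_mul hn).ne_int _ h2

private lemma backward_dir {α : ℝ} (hα : α = (1 + Real.sqrt 5) / 2) (n : ℤ) (hn : n ≠ 0) :
    ⌊(⌊(n : ℝ) * α⌋ : ℝ) * α⌋ + 1 = ⌊(n : ℝ) * α ^ 2⌋ := by
  have h5 : Real.sqrt 5 ^ 2 = 5 := Real.sq_sqrt (by norm_num)
  have hs := sqrt5_lt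
  have hφ2 : α ^ 2 = α + 1 := by rw [hα]; linear_combination (1/4) * h5
  have hφ1 : 1 < α := by rw [hα]; nlinarith [hs.1]
  have hφlt : α < 2 := by rw [hα]; nlinarith [hs.2]
  have hirr : Irrational α := hα ▸ irr_phi
  set m : ℤ := ⌊(n : ℝ) * α⌋ with hm
  set x : ℝ := Int.fract ((n : ℝ) * α) with hx
  have hx0 : 0 < x := fract_pos_of_irr hirr hn
  have hx1 : x < 1 := Int.fract_lt_one _
  have hfl : (m : ℝ) + x = (n : ℝ) * α := Int.floor_add_fract _
  have hb : ⌊(n : ℝ) * α ^ 2⌋ = m + n := by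
    rw [show (n : ℝ) * α ^ 2 = (n : ℝ) * α + (n : ℤ) by rw [hφ2]; push_cast; ring,
      Int.floor_add_intCast]
  have hma : (m : ℝ) * α = ((m + n : ℤ) : ℝ) + (x - x * α) := by
    push_cast
    linear_combination (α - 1) * hfl + (n : ℝ) * hφ2
  have hfloor : ⌊(m : ℝ) * α⌋ = m + n + (-1) := by
    rw [hma, Int.floor_intCast_add]
    congr 1
    rw [Int.floor_eq_iff]
    constructor
    · push_cast; nlinarith
    · push_cast; nlinarith
  rw [hfloor, hb]; ring

private lemma forward_dir {α : ℝ}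
    (H : ∀ n : ℤ, n ≠ 0 → ⌊(⌊(n : ℝ) * α⌋ : ℝ) * α⌋ + 1 = ⌊(n : ℝ) * α ^ 2⌋) :
    α = (1 + Real.sqrt 5) / 2 := by
  -- basic bounds on ee
  have hE : ∀ n : ℤ, n ≠ 0 → 0 < ee α n ∧ ee α n ≤ 1 := by
    intro n hn
    have h := H n hn
    have hc : ((⌊(⌊(n : ℝ) * α⌋ : ℝ) * α⌋ : ℤ) : ℝ) + 1 = ((⌊(n : ℝ) * α ^ 2⌋ : ℤ) : ℝ) := by
      exact_mod_cast congrArg (fun z : ℤ => (z : ℝ)) h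
    have h1 := Int.lt_floor_add_one ((⌊(n : ℝ) * α⌋ : ℝ) * α)
    have h2 := Int.floor_le ((⌊(n : ℝ) * α⌋ : ℝ) * α)
    have hmc : (⌊(n : ℝ) * α⌋ : ℝ) * α = α * (⌊(n : ℝ) * α⌋ : ℝ) := mul_comm _ _
    unfold ee
    constructor <;> linarith
  have hfr0 : ∀ n : ℤ, n ≠ 0 → 0 ≤ Int.fract ((n : ℝ) * α) := fun n _ => Int.fract_nonneg _
  have hfr1 : ∀ n : ℤ, n ≠ 0 → Int.fract ((n : ℝ) * α) < 1 := fun n _ => Int.fract_lt_one _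
  -- positivity of α
  have hα0 : 0 < α := by
    by_contra hle
    push_neg at hle
    have h1 := (hE 1 one_ne_zero).1
    rw [ee_eq] at h1
    have hy := Int.fract_nonneg (((1 : ℤ) : ℝ) * α ^ 2)
    have hx0 := Int.fract_nonneg (((1 : ℤ) : ℝ) * α)
    nlinarith
  -- fract (nα) > 0 for n ≠ 0
  have hxpos : ∀ n : ℤ, n ≠ 0 → 0 < Int.fract ((n : ℝ) * α) := by
    intro n hn
    have h1 := (hE n hn).1
    rw [ee_eq] at h1
    have hy := Int.fract_nonneg ((n : ℝ) * α ^ 2)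
    have hx0 := Int.fract_nonneg ((n : ℝ) * α)
    nlinarith
  -- α irrational
  have hirr : Irrational α := by
    rw [Irrational]
    rintro ⟨q, hq⟩
    have hd : ((q.den : ℤ)) ≠ 0 := Int.natCast_ne_zero.2 q.den_nz
    have hcast : ((q.den : ℤ) : ℝ) * α = ((q.num : ℤ) : ℝ) := by
      rw [← hq, Rat.cast_def]
      have : ((q.den : ℝ)) ≠ 0 := Nat.cast_ne_zero.2 q.den_nz
      push_cast
      field_simp
    have := hxpos (q.den : ℤ) hd
    rw [hcast, Int.fract_intCast] at this
    exact lt_irrefl _ this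
  have hxneg : ∀ n : ℤ, n ≠ 0 →
      Int.fract (((-n : ℤ) : ℝ) * α) = 1 - Int.fract ((n : ℝ) * α) := by
    intro n hn
    rw [show ((-n : ℤ) : ℝ) * α = -((n : ℝ) * α) by push_cast; ring]
    exact Int.fract_neg (ne_of_gt (hxpos n hn))
  by_cases hα2 : Irrational (α ^ 2)
  · -- main case : α² irrational
    have hypos : ∀ n : ℤ, n ≠ 0 → 0 < Int.fract ((n : ℝ) * α ^ 2) := fun n hn =>
      fract_pos_of_irr hα2 hn
    have hyneg : ∀ n : ℤ, n ≠ 0 →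
        Int.fract (((-n : ℤ) : ℝ) * α ^ 2) = 1 - Int.fract ((n : ℝ) * α ^ 2) := by
      intro n hn
      rw [show ((-n : ℤ) : ℝ) * α ^ 2 = -((n : ℝ) * α ^ 2) by push_cast; ring]
      exact Int.fract_neg (ne_of_gt (hypos n hn))
    have hEc : ∀ n : ℤ, n ≠ 0 → ee α n < α - 1 := by
      intro n hn
      have h1 := (hE (-n) (neg_ne_zero.2 hn)).1
      rw [ee_eq, hxneg n hn, hyneg n hn] at h1
      rw [ee_eq]
      linarith
    have hα1 : 1 < α := by
      have h1 := hEc 1 one_ne_zero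
      have h2 := (hE 1 one_ne_zero).1
      linarith
    have hαlt : α < 2 := by
      rcases lt_or_ge α 2 with h | h
      · exact h
      exfalso
      have hαne2 : α ≠ 2 := fun h2 => hirr.ne_int 2 (by rw [h2]; norm_num)
      have h2 : 2 < α := lt_of_le_of_ne h (Ne.symm hαne2)
      obtain ⟨j, hj0, hjgt⟩ := exists_fract_gt hirr
        (show 2 / α < 1 by rw [div_lt_one hα0]; linarith)
      have he := (hE j hj0).2
      rw [ee_eq] at he
      have hyj := Int.fract_lt_one ((j : ℝ) * α ^ 2)
      have hmul : α * (2 / α) < α * Int.fract ((j : ℝ) * α) := mul_lt_mul_of_pos_left hjgt hα0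
      have hcan : α * (2 / α) = 2 := by field_simp
      linarith
    have hfl1 : ⌊α⌋ = 1 := Int.floor_eq_iff.2 ⟨by push_cast; linarith, by push_cast; linarith⟩
    have hfr1' : Int.fract α = α - 1 := by
      have h := Int.floor_add_fract α
      rw [hfl1] at h
      push_cast at h
      linarith
    have hE1eq : ee α 1 = (⌊α ^ 2⌋ : ℝ) - α := by
      unfold ee
      norm_num [hfl1]
    have key : ∀ n : ℤ, 1 ≤ n → ∃ K : ℤ,
        Int.fract ((n : ℝ) * α) = (n : ℝ) * (α - 1) - K ∧
          ee α n = (n : ℝ) * (ee α 1) - (K : ℝ) * (α - 1) := by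
      have key0 : ∀ k : ℕ, ∀ n : ℤ, n = 1 + (k : ℤ) → ∃ K : ℤ,
          Int.fract ((n : ℝ) * α) = (n : ℝ) * (α - 1) - K ∧
            ee α n = (n : ℝ) * (ee α 1) - (K : ℝ) * (α - 1) := by
        intro k
        induction k with
        | zero =>
          intro n hn
          subst hn
          refine ⟨0, ?_, ?_⟩ <;> push_cast <;> norm_num [hfr1']
        | succ k ih =>
          intro n hn
          have hn' : n = (1 + (k : ℤ)) + 1 := by push_cast at hn; omega
          obtain ⟨K, hK1, hK2⟩ := ih (1 + (k : ℤ)) rfl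
          subst hn'
          obtain ⟨δ, hδ01, hδf, hδfl⟩ := fract_add_aux (((1 + (k : ℤ)) : ℝ) * α) α
          obtain ⟨δ', hδ'01, hδ'f, hδ'fl⟩ := fract_add_aux (((1 + (k : ℤ)) : ℝ) * α ^ 2) (α ^ 2)
          have hca : (((1 + (k : ℤ)) + 1 : ℤ) : ℝ) * α = ((1 + (k : ℤ)) : ℝ) * α + α := by
            push_cast; ring
          have hca2 : (((1 + (k : ℤ)) + 1 : ℤ) : ℝ) * α ^ 2
              = ((1 + (k : ℤ)) : ℝ) * α ^ 2 + α ^ 2 := by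
            push_cast; ring
          have hee : ee α ((1 + (k : ℤ)) + 1)
              = ee α (1 + (k : ℤ)) + ee α 1 + (δ' : ℝ) - α * (δ : ℝ) := by
            unfold ee
            rw [hca, hca2, hδfl, hδ'fl]
            push_cast
            norm_num
            ring
          have hen1a := (hE ((1 + (k : ℤ)) + 1) (by omega)).1
          have hen1b := hEc ((1 + (k : ℤ)) + 1) (by omega)
          have hena := (hE (1 + (k : ℤ)) (by omega)).1
          have henb := hEc (1 + (k : ℤ)) (by omega)
          have he1a := (hE 1 one_ne_zero).1
          have he1b := hEc 1 one_ne_zero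
          have hδδ' : δ' = δ := by
            rcases hδ01 with rfl | rfl <;> rcases hδ'01 with rfl | rfl
            · rfl
            · exfalso; push_cast at hee; linarith
            · exfalso; push_cast at hee; linarith
            · rfl
          subst hδδ'
          refine ⟨K + δ', ?_, ?_⟩
          · rw [hca, hδf]
            push_cast at hK1 ⊢
            linarith [hfr1']
          · rw [hee, hK2]
            push_cast; ring
      intro n hn
      exact key0 (n - 1).toNat n (by omega)
    have habs : ∀ n : ℤ, 1 ≤ n →
        (n : ℝ) * (ee α 1 - (α - 1) ^ 2) < (α - 1) ∧
          -(α - 1) < (n : ℝ) * (ee α 1 - (α - 1) ^ 2) := by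
      intro n hn
      obtain ⟨K, h1, h2⟩ := key n hn
      have hb1 : 0 ≤ (n : ℝ) * (α - 1) - K := h1 ▸ Int.fract_nonneg _
      have hb2 : (n : ℝ) * (α - 1) - K < 1 := h1 ▸ Int.fract_lt_one _
      have he1 : 0 < ee α n := (hE n (by omega)).1
      have he2 : ee α n < α - 1 := hEc n (by omega)
      have hm1 : 0 ≤ (α - 1) * ((n : ℝ) * (α - 1) - K) := mul_nonneg (by linarith) hb1
      have hm2 : (α - 1) * ((n : ℝ) * (α - 1) - K) < (α - 1) * 1 :=
        mul_lt_mul_of_pos_left hb2 (by linarith)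
      constructor <;> nlinarith [h2, hm1, hm2, he1, he2]
    have hE1c : ee α 1 = (α - 1) ^ 2 := by
      by_contra hne
      have hεpos : 0 < |ee α 1 - (α - 1) ^ 2| := abs_pos.2 (sub_ne_zero.2 hne)
      obtain ⟨N, hN⟩ := exists_nat_gt (1 / |ee α 1 - (α - 1) ^ 2|)
      obtain ⟨h1, h2⟩ := habs ((N : ℤ) + 1) (by omega)
      have hcast : (((N : ℤ) + 1 : ℤ) : ℝ) = (N : ℝ) + 1 := by push_cast; ring
      rw [hcast] at h1 h2
      have hNpos : (0 : ℝ) < (N : ℝ) + 1 := by positivity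
      have habsm : ((N : ℝ) + 1) * |ee α 1 - (α - 1) ^ 2| < 1 := by
        have heq : ((N : ℝ) + 1) * |ee α 1 - (α - 1) ^ 2|
            = |((N : ℝ) + 1) * (ee α 1 - (α - 1) ^ 2)| := by
          rw [abs_mul, abs_of_pos hNpos]
        rw [heq, abs_lt]
        constructor <;> linarith
      have hgt : 1 < ((N : ℝ) + 1) * |ee α 1 - (α - 1) ^ 2| := by
        rw [← div_lt_iff₀ hεpos]
        linarith
      linarith
    have hfloor2 : (⌊α ^ 2⌋ : ℝ) = α ^ 2 - α + 1 := by
      rw [hE1eq] at hE1c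
      linear_combination hE1c
    have h2' : ⌊α ^ 2⌋ = 2 := by
      have l1 : (1 : ℤ) < ⌊α ^ 2⌋ := by
        have : (1 : ℝ) < (⌊α ^ 2⌋ : ℝ) := by rw [hfloor2]; nlinarith
        exact_mod_cast this
      have l2 : ⌊α ^ 2⌋ < (3 : ℤ) := by
        have : ((⌊α ^ 2⌋ : ℤ) : ℝ) < 3 := by rw [hfloor2]; nlinarith
        exact_mod_cast this
      omega
    have hquad : α ^ 2 = α + 1 := by
      have h := hfloor2
      rw [h2'] at h
      push_cast at h
      linarith
    have hpos : (0 : ℝ) ≤ 2 * α - 1 := by linarith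
    have h5 : (2 * α - 1) ^ 2 = 5 := by nlinarith [hquad]
    have hsq : Real.sqrt 5 = 2 * α - 1 := by rw [← h5, Real.sqrt_sq hpos]
    linarith
  · exfalso
    rw [Irrational, not_not] at hα2
    obtain ⟨q, hq⟩ := hα2
    by_cases hden : q.den = 1
    · have hz : α ^ 2 = ((q.num : ℤ) : ℝ) := by
        rw [← hq, Rat.cast_def, hden]
        norm_num
      have hy0 : ∀ n : ℤ, Int.fract ((n : ℝ) * α ^ 2) = 0 := by
        intro n
        rw [hz, show (n : ℝ) * ((q.num : ℤ) : ℝ) = ((n * q.num : ℤ) : ℝ) by push_cast; ring,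
          Int.fract_intCast]
      have e1 := (hE 1 one_ne_zero).2
      have em1 := (hE (-1) (by norm_num)).2
      rw [ee_eq, hy0, sub_zero] at e1 em1
      rw [hxneg 1 one_ne_zero] at em1
      have hα2le : α ≤ 2 := by nlinarith
      have hz1 : (0 : ℝ) < ((q.num : ℤ) : ℝ) := by rw [← hz]; exact pow_pos hα0 2
      have hz4 : ((q.num : ℤ) : ℝ) ≤ 4 := by rw [← hz]; nlinarith
      have hz1' : 0 < q.num := by exact_mod_cast hz1
      have hz4' : q.num ≤ 4 := by exact_mod_cast hz4
      have hcases : q.num = 1 ∨ q.num = 2 ∨ q.num = 3 ∨ q.num = 4 := by omega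
      rcases hcases with h | h | h | h
      · rw [h] at hz; push_cast at hz
        have h0 : (α - 1) * (α + 1) = 0 := by linear_combination hz
        rcases mul_eq_zero.1 h0 with h1 | h1
        · exact hirr.ne_int 1 (by push_cast; linarith)
        · linarith
      · rw [h] at hz; push_cast at hz
        have hb1 : 1.4 < α := by nlinarith
        have hb2 : α < 1.5 := by nlinarith
        have hfl2 : ⌊((2 : ℤ) : ℝ) * α⌋ = 2 :=
          Int.floor_eq_iff.2 ⟨by push_cast; linarith, by push_cast; linarith⟩
        have hfr2 : Int.fract (((2 : ℤ) : ℝ) * α) = 2 * α - 2 := by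
          have h' := Int.floor_add_fract (((2 : ℤ) : ℝ) * α)
          rw [hfl2] at h'
          push_cast at h' ⊢
          linarith
        have e2 := (hE 2 (by norm_num)).2
        rw [ee_eq, hy0, sub_zero, hfr2] at e2
        nlinarith
      · rw [h] at hz; push_cast at hz
        have hb1 : 1.7 < α := by nlinarith
        have hb2 : α < 1.8 := by nlinarith
        have hflo : ⌊((1 : ℤ) : ℝ) * α⌋ = 1 :=
          Int.floor_eq_iff.2 ⟨by push_cast; linarith, by push_cast; linarith⟩
        have hfro : Int.fract (((1 : ℤ) : ℝ) * α) = α - 1 := by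
          have h' := Int.floor_add_fract (((1 : ℤ) : ℝ) * α)
          rw [hflo] at h'
          push_cast at h' ⊢
          linarith
        rw [hfro] at e1
        nlinarith
      · rw [h] at hz; push_cast at hz
        have h0 : (α - 2) * (α + 2) = 0 := by linear_combination hz
        rcases mul_eq_zero.1 h0 with h1 | h1
        · exact hirr.ne_int 2 (by push_cast; linarith)
        · linarith
    · have hdR : ((q.den : ℝ)) ≠ 0 := Nat.cast_ne_zero.2 q.den_nz
      have hy1ne : Int.fract (((1 : ℤ) : ℝ) * α ^ 2) ≠ 0 := by
        intro h0
        have h2 := Int.self_sub_fract (((1 : ℤ) : ℝ) * α ^ 2)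
        rw [h0, sub_zero] at h2
        have hqz : (q : ℚ) = ((⌊((1 : ℤ) : ℝ) * α ^ 2⌋ : ℤ) : ℚ) := by
          have hr : (q : ℝ) = ((⌊((1 : ℤ) : ℝ) * α ^ 2⌋ : ℤ) : ℝ) := by
            rw [hq]; push_cast at h2 ⊢; linarith
          exact_mod_cast hr
        have hd := congrArg Rat.den hqz
        rw [Rat.den_intCast] at hd
        exact hden hd
      have hy1neg : Int.fract (((-1 : ℤ) : ℝ) * α ^ 2)
          = 1 - Int.fract (((1 : ℤ) : ℝ) * α ^ 2) := by
        rw [show ((-1 : ℤ) : ℝ) * α ^ 2 = -(((1 : ℤ) : ℝ) * α ^ 2) by push_cast; ring]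
        exact Int.fract_neg hy1ne
      have hα1 : 1 < α := by
        have e1 := (hE 1 one_ne_zero).1
        have em1 := (hE (-1) (by norm_num)).1
        rw [ee_eq] at e1 em1
        rw [hxneg 1 one_ne_zero, hy1neg] at em1
        linarith
      have hd0 : ((q.den : ℤ)) ≠ 0 := Int.natCast_ne_zero.2 q.den_nz
      have hθ : Irrational (((q.den : ℤ) : ℝ) * α) := hirr.intCast_mul hd0
      obtain ⟨j, hj0, hjgt⟩ := exists_fract_gt hθ
        (show 1 / α < 1 by rw [div_lt_one (by linarith)]; linarith)
      have hn0 : j * (q.den : ℤ) ≠ 0 := mul_ne_zero hj0 hd0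
      have he := (hE (j * (q.den : ℤ)) hn0).2
      rw [ee_eq] at he
      have hxjd : Int.fract (((j * (q.den : ℤ) : ℤ) : ℝ) * α)
          = Int.fract ((j : ℝ) * (((q.den : ℤ) : ℝ) * α)) := by
        congr 1
        push_cast
        ring
      have hyjd : Int.fract (((j * (q.den : ℤ) : ℤ) : ℝ) * α ^ 2) = 0 := by
        have heq : ((j * (q.den : ℤ) : ℤ) : ℝ) * α ^ 2 = ((j * q.num : ℤ) : ℝ) := by
          rw [← hq, Rat.cast_def]
          push_cast
          field_simp
        rw [heq, Int.fract_intCast]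
      rw [hyjd, sub_zero, hxjd] at he
      have hmul : α * (1 / α) < α * Int.fract ((j : ℝ) * (((q.den : ℤ) : ℝ) * α)) :=
        mul_lt_mul_of_pos_left hjgt (by linarith)
      have hcan : α * (1 / α) = 1 := by field_simp
      linarith

theorem stmt_2 (α : ℝ) :
    (∀ n : ℤ, n ≠ 0 → ⌊(⌊(n : ℝ) * α⌋ : ℝ) * α⌋ + 1 = ⌊(n : ℝ) * α ^ 2⌋) ↔
      α = (1 + Real.sqrt 5) / 2 := by
  constructor
  · exact forward_dir
  · intro hα n hn
    exact backward_dir hα n hn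
end

section
/- Let l, k be positive integers and α a positive real number. Then α^(l+k) − α^l is an integer lying in [1, 2^(l/k)) if and only if the identity ⌊⌊nα^l⌋·α^k⌋ + 1 = ⌊n·α^(l+k)⌋ holds for all nonzero integers n. -/
open Int Set


lemma denseCombo (x : ℝ) (hx : Irrational x) :
    Dense {z : ℝ | ∃ m j : ℤ, z = m + j * x} := by
  set S : AddSubgroup ℝ :=
    { carrier := {z : ℝ | ∃ m j : ℤ, z = m + j * x}
      zero_mem' := ⟨0, 0, by simp⟩
      add_mem' := by
        rintro a b ⟨m1, j1, rfl⟩ ⟨m2, j2, rfl⟩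
        exact ⟨m1 + m2, j1 + j2, by push_cast; ring⟩
      neg_mem' := by
        rintro a ⟨m1, j1, rfl⟩
        exact ⟨-m1, -j1, by push_cast; ring⟩ } with hS
  rcases S.dense_or_cyclic with h | ⟨a, ha⟩
  · exact h
  · exfalso
    have h1 : (1 : ℝ) ∈ S := ⟨1, 0, by simp⟩
    have h2 : x ∈ S := ⟨0, 1, by simp⟩
    rw [ha, AddSubgroup.mem_closure_singleton] at h1 h2
    obtain ⟨n, hn⟩ := h1
    obtain ⟨j, hj⟩ := h2
    have hn0 : (n : ℝ) ≠ 0 := by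
      intro h; rw [zsmul_eq_mul, h, zero_mul] at hn; exact one_ne_zero hn.symm
    refine hx ⟨(j : ℚ) / (n : ℚ), ?_⟩
    rw [zsmul_eq_mul] at hn hj
    push_cast
    rw [div_eq_iff hn0, ← hj]; rw [show (j:ℝ) * a * n = j * (n * a) by ring, hn, mul_one]

lemma exists_fract_mem (x : ℝ) (hx : Irrational x) (y u v : ℝ)
    (hu : 0 ≤ u) (huv : u < v) (hv : v ≤ 1) :
    ∃ j : ℤ, Int.fract (y + j * x) ∈ Set.Ioo u v := by
  obtain ⟨z, hz, hz2⟩ := (denseCombo x hx).exists_between (show u - y < v - y by linarith)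
  obtain ⟨m, j, rfl⟩ := hz
  refine ⟨j, ?_⟩
  have h1 : u < y + (m + j * x) := by have := hz2.1; linarith
  have h2 : y + (m + j * x) < v := by have := hz2.2; linarith
  have key : Int.fract (y + j * x) = y + (m + j * x) := by
    have e1 : Int.fract (y + j * x) = Int.fract (y + j * x + m) := (Int.fract_add_intCast _ _).symm
    rw [e1, Int.fract_eq_self.2 ⟨by linarith, by linarith⟩]; ring
  rw [key]; exact ⟨h1, h2⟩

lemma exists_fract_mem' (x : ℝ) (hx : Irrational x) (y u v : ℝ)
    (hu : 0 ≤ u) (huv : u < v) (hv : v ≤ 1) (j₀ : ℤ) :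
    ∃ j : ℤ, j ≠ j₀ ∧ Int.fract (y + j * x) ∈ Set.Ioo u v := by
  obtain ⟨j1, hj1⟩ := exists_fract_mem x hx y u ((u+v)/2) hu (by linarith) (by linarith)
  obtain ⟨j2, hj2⟩ := exists_fract_mem x hx y ((u+v)/2) v (by linarith) (by linarith) hv
  rcases eq_or_ne j1 j₀ with rfl | h
  · refine ⟨j2, ?_, ⟨by linarith [hj2.1], hj2.2⟩⟩
    rintro rfl; exact absurd hj1.2 (not_lt.2 (le_of_lt hj2.1))
  · exact ⟨j1, h, ⟨hj1.1, by linarith [hj1.2]⟩⟩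

lemma nt_pow (p S l k : ℕ) (hp : 2 ≤ p) (hl : 1 ≤ l) (hk : 1 ≤ k)
    (hEq : p ^ (l + k) = S ^ l) :
    ∃ t : ℕ, 2 ≤ t ∧ p = t ^ (l / Nat.gcd (l + k) l) := by
  set g := Nat.gcd (l + k) l with hgdef
  have hg : 0 < g := Nat.gcd_pos_of_pos_right _ hl
  set L := (l + k) / g with hLdef
  set l' := l / g with hl'def
  have hLg : L * g = l + k := Nat.div_mul_cancel (Nat.gcd_dvd_left _ _)
  have hlg : l' * g = l := Nat.div_mul_cancel (Nat.gcd_dvd_right _ _)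
  have hco : Nat.Coprime L l' := Nat.coprime_div_gcd_div_gcd hg
  have hl' : 1 ≤ l' := Nat.div_pos (Nat.le_of_dvd hl (Nat.gcd_dvd_right _ _)) hg
  have hS : 2 ≤ S := by
    by_contra h
    push_neg at h
    have h1 : S ^ l ≤ 1 := by
      calc S ^ l ≤ 1 ^ l := Nat.pow_le_pow_left (by omega) l
        _ = 1 := one_pow l
    have h2 : 2 ≤ p ^ (l + k) := by
      calc 2 = 2 ^ 1 := rfl
        _ ≤ 2 ^ (l + k) := Nat.pow_le_pow_right (by norm_num) (by omega)
        _ ≤ p ^ (l + k) := Nat.pow_le_pow_left hp _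
    omega
  have hkey : p ^ L = S ^ l' := by
    have h1 : (p ^ L) ^ g = (S ^ l') ^ g := by
      rw [← pow_mul, ← pow_mul, hLg, hlg, hEq]
    exact Nat.pow_left_injective hg.ne' h1
  -- Bezout
  have hbez : (1 : ℤ) = L * Nat.gcdA L l' + l' * Nat.gcdB L l' := by
    have := Nat.gcd_eq_gcd_ab L l'
    rwa [hco] at this
  set A := Nat.gcdA L l' with hA
  set B := Nat.gcdB L l' with hB
  have hp0 : ((p : ℚ)) ≠ 0 := by positivity
  have hS0 : ((S : ℚ)) ≠ 0 := by positivity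
  set τ : ℚ := (S : ℚ) ^ A * (p : ℚ) ^ B with hτdef
  have hkeyQ : (S : ℚ) ^ (l' : ℤ) = (p : ℚ) ^ (L : ℤ) := by
    rw [zpow_natCast, zpow_natCast]
    exact_mod_cast hkey.symm
  have hτ : τ ^ (l' : ℤ) = (p : ℚ) := by
    rw [hτdef, mul_zpow, ← zpow_mul, ← zpow_mul, mul_comm A (l' : ℤ), zpow_mul, hkeyQ,
      ← zpow_mul, ← zpow_add₀ hp0]
    rw [show (L : ℤ) * A + B * (l' : ℤ) = 1 by linarith [hbez], zpow_one]
  have hτpow : τ ^ l' = (p : ℚ) := by rw [← zpow_natCast, hτ]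
  have hden : τ.den = 1 := by
    have h1 : (τ ^ l').den = τ.den ^ l' := Rat.den_pow τ l'
    rw [hτpow] at h1
    have h2 : ((p : ℚ)).den = 1 := Rat.den_natCast p
    rw [h2] at h1
    exact (pow_eq_one_iff_left (by omega : l' ≠ 0)).mp h1.symm
  have hτpos : 0 < τ := by
    apply mul_pos <;> apply zpow_pos <;> positivity
  set t := τ.num.toNat with ht
  have hnum : (τ.num : ℚ) = τ := by
    conv_rhs => rw [← Rat.num_div_den τ]
    rw [hden]; simp
  have htq : (t : ℚ) = τ := by
    rw [ht]
    rw [show ((τ.num.toNat : ℕ) : ℚ) = ((τ.num.toNat : ℤ) : ℚ) by push_cast; ring]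
    rw [Int.toNat_of_nonneg (by positivity : (0:ℤ) ≤ τ.num)]
    exact hnum
  have htp : t ^ l' = p := by
    have : ((t : ℚ)) ^ l' = (p : ℚ) := by rw [htq, hτpow]
    exact_mod_cast this
  refine ⟨t, ?_, htp.symm⟩
  by_contra h
  push_neg at h
  have hle : t ^ l' ≤ 1 := by
    calc t ^ l' ≤ 1 ^ l' := Nat.pow_le_pow_left (by omega) _
      _ = 1 := one_pow _
  rw [htp] at hle
  omega

lemma pow_inj_nonneg {a b : ℝ} (ha : 0 ≤ a) (hb : 0 ≤ b) {n : ℕ} (hn : n ≠ 0) (h : a^n = b^n) :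
    a = b := by
  rcases lt_trichotomy a b with h1 | h1 | h1
  · exact absurd h (ne_of_lt (pow_lt_pow_left₀ h1 ha hn))
  · exact h1
  · exact absurd h.symm (ne_of_lt (pow_lt_pow_left₀ h1 hb hn))

lemma rat_pow_contra (l k : ℕ) (hl : 1 ≤ l) (hk : 1 ≤ k) (α : ℝ) (hα1 : 1 < α)
    (M : ℤ) (heq : α ^ (l + k) = α ^ l + M) (hγ2 : α ^ k < 2)
    (q : ℚ) (hq : (q : ℝ) = α ^ l) : False := by
  have hβ1 : 1 < α ^ l := one_lt_pow₀ hα1 (by omega)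
  have hq1 : 1 < q := by rw [show (1:ℚ) = ((1:ℚ):ℚ) from rfl]; exact_mod_cast hq ▸ hβ1
  set p := q.num with hp
  set Q := q.den with hQdef
  have hQ0 : (Q : ℚ) ≠ 0 := by exact_mod_cast q.den_nz
  have hqQ : (p : ℚ) = q * Q := (div_eq_iff hQ0).mp (Rat.num_div_den q)
  -- real equation → ℚ equation
  have hReq : ((q : ℝ) + M) ^ l = (q : ℝ) ^ (l + k) := by
    rw [hq, ← heq, ← pow_mul, ← pow_mul, Nat.mul_comm l (l+k)]
  have hQeq : (q + M) ^ l = q ^ (l + k) := by exact_mod_cast hReq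
  have hZq : ((p : ℚ) + M * Q) ^ l * (Q:ℚ) ^ k = (p : ℚ) ^ (l + k) := by
    rw [hqQ, show ((q * Q) + M * Q : ℚ) = (q + M) * Q by ring, mul_pow, mul_pow, hQeq]
    ring
  have hZZ : (p + M * Q) ^ l * (Q : ℤ) ^ k = p ^ (l + k) := by exact_mod_cast hZq
  -- Q = 1
  have hcop : IsCoprime (p) ((Q : ℤ)) := by
    rw [Int.isCoprime_iff_gcd_eq_one]
    simpa [Int.gcd] using q.reduced
  have hdvd : ((Q : ℤ)) ^ k ∣ p ^ (l + k) := ⟨(p + M * Q) ^ l, by rw [← hZZ]; ring⟩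
  have hunit : IsUnit ((Q : ℤ) ^ k) := ((hcop.symm.pow (m := k) (n := l + k)).isUnit_of_dvd hdvd)
  have hQ1 : Q = 1 := by
    rcases Int.isUnit_iff.mp hunit with h | h
    · have : Q ^ k = 1 := by exact_mod_cast h
      exact (pow_eq_one_iff_left (by omega : k ≠ 0)).mp this
    · have : (0:ℤ) < (Q:ℤ)^k := by positivity
      omega
  have hqp : (p : ℚ) = q := by rw [hqQ, hQ1]; simp
  have hp2 : 2 ≤ p := by
    have h : (1:ℚ) < (p:ℚ) := by rw [hqp]; exact hq1
    have h2 : (1:ℤ) < p := by exact_mod_cast h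
    omega
  have hZZ' : (p + M) ^ l = p ^ (l + k) := by
    have := hZZ; rw [hQ1] at this; simpa using this
  have hpMpos : 0 < p + M := by
    have h1 : (0:ℝ) < α ^ (l + k) := by positivity
    rw [heq, ← hq] at h1
    have h2 : (0:ℚ) < q + M := by exact_mod_cast h1
    rw [← hqp] at h2
    exact_mod_cast h2
  -- to ℕ
  set P := p.toNat with hPdef
  set Sn := (p + M).toNat with hSdef
  have hPp : (P : ℤ) = p := Int.toNat_of_nonneg (by omega)
  have hSp : (Sn : ℤ) = p + M := Int.toNat_of_nonneg (by omega)
  have hNat : P ^ (l + k) = Sn ^ l := by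
    have : (P : ℤ) ^ (l + k) = (Sn : ℤ) ^ l := by rw [hPp, hSp, hZZ']
    exact_mod_cast this
  have hP2 : 2 ≤ P := by omega
  obtain ⟨t, ht2, htP⟩ := nt_pow P Sn l k hP2 hl hk hNat
  set g := Nat.gcd (l + k) l with hgdef
  have hg : 0 < g := Nat.gcd_pos_of_pos_right _ hl
  have hgl : g ∣ l := Nat.gcd_dvd_right _ _
  have hgk : g ∣ k := by
    have h := Nat.dvd_sub (Nat.gcd_dvd_left (l+k) l) hgl
    rwa [Nat.add_sub_cancel_left] at h
  set l' := l / g with hl'def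
  have hlg : g * l' = l := Nat.mul_div_cancel' hgl
  have hl' : l' ≠ 0 := by
    intro h; rw [h, Nat.mul_zero] at hlg; omega
  -- α ^ g = t
  have hPα : (P : ℝ) = α ^ l := by
    rw [← hq, ← hqp, ← hPp]
    push_cast
    ring
  have hαg : α ^ g = (t : ℝ) := by
    apply pow_inj_nonneg (by positivity) (by positivity) hl'
    rw [← pow_mul, hlg, ← hPα]
    exact_mod_cast congrArg (fun n : ℕ => (n:ℝ)) htP
  set k' := k / g with hk'def
  have hkg : g * k' = k := Nat.mul_div_cancel' hgk
  have hk' : k' ≠ 0 := by intro h; rw [h, Nat.mul_zero] at hkg; omega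
  have : (2:ℝ) ≤ α ^ k := by
    rw [← hkg, pow_mul, hαg]
    calc (2:ℝ) ≤ 2 ^ k' := le_self_pow₀ (by norm_num) hk'
      _ ≤ (t:ℝ) ^ k' := by
          apply pow_le_pow_left₀ (by norm_num)
          exact_mod_cast ht2
  linarith

lemma fwd (l k : ℕ) (hl : 1 ≤ l) (hk : 1 ≤ k) (α : ℝ) (hα : 0 < α) (M : ℤ)
    (h1 : α ^ (l + k) - α ^ l = (M : ℝ)) (h2 : 1 ≤ (M : ℝ))
    (h3 : (M : ℝ) < (2 : ℝ) ^ ((l : ℝ) / (k : ℝ))) :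
    ∀ n : ℤ, n ≠ 0 →
      ⌊(⌊(n : ℝ) * α ^ l⌋ : ℝ) * α ^ k⌋ + 1 = ⌊(n : ℝ) * α ^ (l + k)⌋ := by
  have heq : α ^ (l + k) = α ^ l + M := by linarith
  have hpowadd : α ^ (l + k) = α ^ l * α ^ k := pow_add α l k
  have hβ0 : (0:ℝ) < α ^ l := by positivity
  have hγ1 : 1 < α ^ k := by nlinarith
  have hα1 : 1 < α := by
    by_contra h
    push_neg at h
    exact absurd hγ1 (not_lt.2 (pow_le_one₀ hα.le h))
  have hk0 : (k : ℝ) ≠ 0 := by positivity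
  have h2l : ((2:ℝ) ^ ((l:ℝ)/(k:ℝ))) ^ k = 2 ^ l := by
    rw [← Real.rpow_natCast ((2:ℝ) ^ ((l:ℝ)/(k:ℝ))) k, ← Real.rpow_mul (by norm_num),
      div_mul_cancel₀ _ hk0, Real.rpow_natCast]
  have hγ2 : α ^ k < 2 := by
    by_contra h
    push_neg at h
    have hA : ((2:ℝ) ^ ((l:ℝ)/(k:ℝ))) ^ k ≤ (α ^ l) ^ k := by
      rw [h2l, ← pow_mul, Nat.mul_comm, pow_mul]
      exact pow_le_pow_left₀ (by norm_num) h l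
    have hB : (2:ℝ) ^ ((l:ℝ)/(k:ℝ)) ≤ α ^ l :=
      le_of_pow_le_pow_left₀ (by omega) hβ0.le hA
    nlinarith
  have hirr : ∀ n : ℤ, n ≠ 0 → Int.fract ((n:ℝ) * α ^ l) ≠ 0 := by
    intro n hn h0
    have hm : (n:ℝ) * α ^ l = (⌊(n:ℝ) * α ^ l⌋ : ℝ) := by
      have := Int.floor_add_fract ((n:ℝ) * α ^ l)
      rw [h0] at this; linarith
    have hn0 : ((n:ℤ):ℝ) ≠ 0 := by exact_mod_cast hn
    refine rat_pow_contra l k hl hk α hα1 M heq hγ2 ((⌊(n:ℝ) * α ^ l⌋ : ℚ) / (n : ℚ)) ?_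
    push_cast
    rw [div_eq_iff hn0, ← hm]
    ring
  intro n hn
  set a := Int.fract ((n:ℝ) * α ^ l) with hadef
  have ha0 : 0 < a := lt_of_le_of_ne (Int.fract_nonneg _) (Ne.symm (hirr n hn))
  have ha1 : a < 1 := Int.fract_lt_one _
  have hprod : (n:ℝ) * α ^ (l + k) = (n:ℝ) * α ^ l + ((n * M : ℤ) : ℝ) := by
    rw [heq]; push_cast; ring
  have hfl : ((⌊(n:ℝ) * α ^ l⌋ : ℝ)) = (n:ℝ) * α ^ l - a := by
    have := Int.floor_add_fract ((n:ℝ) * α ^ l); linarith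
  have hfr : ((⌊(n:ℝ) * α ^ (l + k)⌋ : ℝ)) = (n:ℝ) * α ^ (l + k) - a := by
    have h4 := Int.floor_add_fract ((n:ℝ) * α ^ (l + k))
    have h5 : Int.fract ((n:ℝ) * α ^ (l + k)) = a := by
      rw [hprod, Int.fract_add_intCast]
    linarith
  have e1 : (⌊(n:ℝ) * α ^ l⌋ : ℝ) * α ^ k = (⌊(n:ℝ) * α ^ (l + k)⌋ : ℝ) + (a - a * α ^ k) := by
    rw [hfl, hfr, hpowadd]; ring
  rw [e1, Int.floor_intCast_add]
  have hm1 : ⌊a - a * α ^ k⌋ = -1 := by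
    have hub : a - a * α ^ k < 0 := by nlinarith
    have hlb : (-1 : ℝ) ≤ a - a * α ^ k := by nlinarith
    have := Int.floor_eq_iff (R := ℝ) (z := -1) (a := a - a * α ^ k)
    rw [this]
    constructor <;> [push_cast; push_cast] <;> linarith
  rw [hm1]
  ring

lemma fract_unit (v : ℤ) (hv : 2 ≤ v) (s : ℤ) :
    Int.fract (((1 + v * s : ℤ) : ℝ) / ((v : ℤ) : ℝ)) = 1 / ((v : ℤ) : ℝ) := by
  have hv0 : ((v : ℤ) : ℝ) ≠ 0 := by
    have : (0:ℝ) < (v:ℝ) := by exact_mod_cast (by omega : (0:ℤ) < v)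
    linarith
  have hvpos : (0:ℝ) < (v:ℝ) := by exact_mod_cast (by omega : (0:ℤ) < v)
  have e : (((1 + v * s : ℤ) : ℝ)) / ((v : ℤ) : ℝ) = 1 / (v:ℝ) + (s : ℝ) := by
    push_cast; field_simp
  rw [e, Int.fract_add_intCast, Int.fract_eq_self.2 ⟨by positivity, by
    rw [div_lt_one hvpos]
    exact_mod_cast (by omega : (1:ℤ) < v)⟩]

lemma fract_add_split (x y : ℝ) :
    Int.fract (x + y) = Int.fract (Int.fract x + Int.fract y) := by
  conv_lhs => rw [← Int.floor_add_fract x, ← Int.floor_add_fract y]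
  rw [show (⌊x⌋:ℝ) + Int.fract x + ((⌊y⌋:ℝ) + Int.fract y)
      = Int.fract x + Int.fract y + ((⌊x⌋ + ⌊y⌋ : ℤ):ℝ) by push_cast; ring,
    Int.fract_add_intCast]

set_option maxHeartbeats 1000000 in
lemma bwd (l k : ℕ) (hl : 1 ≤ l) (hk : 1 ≤ k) (α : ℝ) (hα : 0 < α)
    (H : ∀ n : ℤ, n ≠ 0 →
      ⌊(⌊(n : ℝ) * α ^ l⌋ : ℝ) * α ^ k⌋ + 1 = ⌊(n : ℝ) * α ^ (l + k)⌋) :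
    ∃ M : ℤ, α ^ (l + k) - α ^ l = (M : ℝ) ∧ 1 ≤ (M : ℝ) ∧
      (M : ℝ) < (2 : ℝ) ^ ((l : ℝ) / (k : ℝ)) := by
  set β := α ^ l with hβdef
  set γ := α ^ k with hγdef
  have hβ0 : 0 < β := by positivity
  have hγ0 : 0 < γ := by positivity
  have hβγ : α ^ (l + k) = β * γ := pow_add α l k
  -- the master inequalities
  have hmain : ∀ n : ℤ, n ≠ 0 →
      Int.fract ((n:ℝ) * (β * γ)) < Int.fract ((n:ℝ) * β) * γ ∧
      Int.fract ((n:ℝ) * β) * γ ≤ Int.fract ((n:ℝ) * (β * γ)) + 1 := by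
    intro n hn
    have h := H n hn
    rw [hβγ] at h
    have hX : ⌊(⌊(n:ℝ) * β⌋ : ℝ) * γ⌋ = ⌊(n:ℝ) * (β * γ)⌋ - 1 := by omega
    have h1 : (⌊(n:ℝ) * β⌋ : ℝ) * γ < (⌊(n:ℝ) * (β * γ)⌋ : ℝ) := by
      have h2 := Int.lt_floor_add_one ((⌊(n:ℝ) * β⌋ : ℝ) * γ)
      rw [hX] at h2; push_cast at h2; linarith
    have h2 : (⌊(n:ℝ) * (β * γ)⌋ : ℝ) - 1 ≤ (⌊(n:ℝ) * β⌋ : ℝ) * γ := by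
      have h3 := Int.floor_le ((⌊(n:ℝ) * β⌋ : ℝ) * γ)
      rw [hX] at h3; push_cast at h3; linarith
    have e1 : (⌊(n:ℝ) * β⌋ : ℝ) = (n:ℝ) * β - Int.fract ((n:ℝ) * β) := by
      have := Int.floor_add_fract ((n:ℝ) * β); linarith
    have e2 : (⌊(n:ℝ) * (β * γ)⌋ : ℝ) = (n:ℝ) * (β * γ) - Int.fract ((n:ℝ) * (β * γ)) := by
      have := Int.floor_add_fract ((n:ℝ) * (β * γ)); linarith
    rw [e1, e2] at h1 h2
    constructor <;> nlinarith [h1, h2]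
  -- fract (n β) ∈ (0,1)
  have ha : ∀ n : ℤ, n ≠ 0 → 0 < Int.fract ((n:ℝ) * β) := by
    intro n hn
    rcases (Int.fract_nonneg ((n:ℝ) * β)).lt_or_eq with h | h
    · exact h
    · exfalso
      have := (hmain n hn).1
      rw [← h] at this
      nlinarith [Int.fract_nonneg ((n:ℝ) * (β * γ))]
  -- β irrational
  have hβirr : Irrational β := by
    rintro ⟨q, hq⟩
    have hd : ((q.den : ℤ) : ℝ) * β = ((q.num : ℤ) : ℝ) := by
      rw [← hq, Rat.cast_def]
      have : ((q.den:ℤ):ℝ) ≠ 0 := by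
        have : (0:ℝ) < ((q.den:ℤ):ℝ) := by exact_mod_cast q.pos
        linarith
      field_simp
      push_cast; ring
    have h0 := ha (q.den : ℤ) (by exact_mod_cast q.den_nz)
    rw [hd, Int.fract_intCast] at h0
    exact lt_irrefl 0 h0
  have hβγ0 : 0 < β * γ := mul_pos hβ0 hγ0
  -- no nonzero integer multiple of βγ is an integer
  have hQ : ∀ n : ℤ, n ≠ 0 → Int.fract ((n:ℝ) * (β * γ)) ≠ 0 := by
    by_contra hcon
    push_neg at hcon
    obtain ⟨n₀, hn₀, hb0⟩ := hcon
    have hm : (n₀:ℝ) * (β * γ) = (⌊(n₀:ℝ) * (β * γ)⌋ : ℝ) := by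
      have := Int.floor_add_fract ((n₀:ℝ) * (β * γ)); rw [hb0] at this; linarith
    set ρ : ℚ := (⌊(n₀:ℝ) * (β * γ)⌋ : ℚ) / (n₀ : ℚ) with hρdef
    have hn₀R : ((n₀:ℤ):ℝ) ≠ 0 := by exact_mod_cast hn₀
    have hρ : (ρ : ℝ) = β * γ := by
      rw [hρdef]
      push_cast
      rw [div_eq_iff hn₀R, ← hm]; ring
    set P := ρ.num with hPdef
    set Q := ρ.den with hQdef
    have hQ0 : (0:ℤ) < (Q:ℤ) := by exact_mod_cast ρ.pos
    have hPQ : β * γ = (P:ℝ) / (Q:ℝ) := by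
      rw [← hρ, Rat.cast_def]
    have hP1 : 1 ≤ P := by
      have hQRR : (0:ℝ) < (Q:ℝ) := by exact_mod_cast hQ0
      have h0 : (0:ℝ) < (P:ℝ)/(Q:ℝ) := by rw [← hPQ]; exact hβγ0
      have h1 : (0:ℝ) < (P:ℝ) := by
        have h2 := mul_pos h0 hQRR
        rwa [div_mul_cancel₀ _ (ne_of_gt hQRR)] at h2
      exact_mod_cast h1
    rcases eq_or_lt_of_le (by exact_mod_cast ρ.pos : 1 ≤ Q) with hQ1 | hQ2
    · -- Q = 1 : βγ is an integer
      have hint : β * γ = (P:ℝ) := by rw [hPQ, ← hQ1]; norm_num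
      have hall : ∀ j : ℤ, j ≠ 0 → Int.fract ((j:ℝ) * β) * γ ≤ 1 := by
        intro j hj
        have h := (hmain j hj).2
        have : Int.fract ((j:ℝ) * (β * γ)) = 0 := by
          rw [hint, show (j:ℝ) * (P:ℝ) = ((j * P : ℤ) : ℝ) by push_cast; ring,
            Int.fract_intCast]
        rw [this] at h; linarith
      have hγle1 : γ ≤ 1 := by
        by_contra hγgt
        push_neg at hγgt
        have h1γ : 1/γ < 1 := by rw [div_lt_one hγ0]; exact hγgt
        obtain ⟨j, hj0, hj⟩ := exists_fract_mem' β hβirr 0 (1/γ) 1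
          (by positivity) h1γ le_rfl 0
        rw [zero_add] at hj
        have := hall j hj0
        have h2 : 1/γ < Int.fract ((j:ℝ) * β) := hj.1
        have h3 := mul_lt_mul_of_pos_right h2 hγ0
        rw [one_div, inv_mul_cancel₀ (ne_of_gt hγ0)] at h3
        linarith
      have hαle1 : α ≤ 1 := by
        by_contra hc
        push_neg at hc
        exact absurd (one_lt_pow₀ hc (by omega) : 1 < γ) (not_lt.2 hγle1)
      have hβle1 : β ≤ 1 := pow_le_one₀ hα.le hαle1
      have hβγge1 : 1 ≤ β * γ := by
        rw [hint]; exact_mod_cast hP1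
      have hβ1 : β = 1 := by nlinarith
      exact hβirr ⟨1, by rw [hβ1]; norm_num⟩
    · -- Q ≥ 2
      have hcop : IsCoprime (P) ((Q:ℤ)) := by
        rw [Int.isCoprime_iff_gcd_eq_one]
        simpa [Int.gcd] using ρ.reduced
      obtain ⟨r, w, hrw⟩ := hcop
      have hQirr : Irrational (((Q:ℤ):ℝ) * β) := hβirr.intCast_mul (by omega)
      have hQR : (0:ℝ) < ((Q:ℤ):ℝ) := by exact_mod_cast hQ0
      set ε : ℝ := min 1 (1/(((Q:ℤ):ℝ) * γ)) with hεdef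
      have hε : 0 < ε := by
        apply lt_min one_pos
        positivity
      obtain ⟨j, hjne, hj⟩ := exists_fract_mem' (((Q:ℤ):ℝ) * β) hQirr ((r:ℝ) * β) 0 ε
        le_rfl hε (min_le_left _ _) ((-r) / (Q:ℤ))
      set n' : ℤ := r + Q * j with hn'def
      have hn'0 : n' ≠ 0 := by
        intro h
        apply hjne
        have : (Q:ℤ) * j = -r := by omega
        rw [← this, Int.mul_ediv_cancel_left j (by omega : (Q:ℤ) ≠ 0)]
      have han' : Int.fract ((n':ℝ) * β) = Int.fract ((r:ℝ) * β + (j:ℝ) * (((Q:ℤ):ℝ) * β)) := by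
        congr 1
        push_cast [hn'def]
        ring
      have hbn' : Int.fract ((n':ℝ) * (β * γ)) = 1 / ((Q:ℤ):ℝ) := by
        have e : (n':ℝ) * (β * γ) = ((1 + (Q:ℤ) * (j * P - w) : ℤ) : ℝ) / ((Q:ℤ):ℝ) := by
          rw [hPQ]
          push_cast [hn'def]
          have hrwR : (r:ℝ) * (P:ℝ) + (w:ℝ) * ((Q:ℤ):ℝ) = 1 := by exact_mod_cast congrArg (fun z : ℤ => (z:ℝ)) hrw
          field_simp
          push_cast
          linear_combination hrwR
        rw [e, fract_unit (Q:ℤ) (by omega) _]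
      have hlow := (hmain n' hn'0).1
      rw [hbn'] at hlow
      have haval := hj
      rw [← han'] at haval
      have h2 : Int.fract ((n':ℝ) * β) < 1/(((Q:ℤ):ℝ) * γ) :=
        lt_of_lt_of_le haval.2 (min_le_right _ _)
      have : Int.fract ((n':ℝ) * β) * γ < 1/((Q:ℤ):ℝ) := by
        rw [lt_div_iff₀ hQR]
        rw [lt_div_iff₀ (by positivity : (0:ℝ) < ((Q:ℤ):ℝ) * γ)] at h2
        nlinarith
      linarith
  -- γ > 1
  have hγ1 : 1 < γ := by
    have h1 := (hmain 1 one_ne_zero).1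
    have h2 := (hmain (-1) (by norm_num)).1
    have e1 : (((-1):ℤ):ℝ) * β = -((((1):ℤ):ℝ) * β) := by push_cast; ring
    have e2 : (((-1):ℤ):ℝ) * (β*γ) = -((((1):ℤ):ℝ) * (β*γ)) := by push_cast; ring
    have ha1 : Int.fract ((((-1):ℤ):ℝ) * β) = 1 - Int.fract ((((1):ℤ):ℝ) * β) := by
      rw [e1, Int.fract_neg (ne_of_gt (ha 1 one_ne_zero))]
    have hb1 : Int.fract ((((-1):ℤ):ℝ) * (β*γ)) = 1 - Int.fract ((((1):ℤ):ℝ) * (β*γ)) := by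
      rw [e2, Int.fract_neg (hQ 1 one_ne_zero)]
    rw [ha1, hb1] at h2
    nlinarith [h1, h2]
  -- γ ≤ 2
  have hγle2 : γ ≤ 2 := by
    by_contra hc
    push_neg at hc
    have h2γ : 2/γ < 1 := by rw [div_lt_one hγ0]; exact hc
    obtain ⟨j, hj0, hj⟩ := exists_fract_mem' β hβirr 0 (2/γ) 1 (by positivity) h2γ le_rfl 0
    rw [zero_add] at hj
    have h := (hmain j hj0).2
    have hblt := Int.fract_lt_one ((j:ℝ) * (β*γ))
    have h3 := mul_lt_mul_of_pos_right hj.1 hγ0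
    rw [div_mul_cancel₀ _ (ne_of_gt hγ0)] at h3
    linarith
  -- γ < 2
  have hγ2 : γ < 2 := by
    rcases lt_or_eq_of_le hγle2 with h | h
    · exact h
    · exfalso
      obtain ⟨j, hj0, hj⟩ := exists_fract_mem' β hβirr 0 0 (1/2) le_rfl (by norm_num)
        (by norm_num) 0
      rw [zero_add] at hj
      have hb : Int.fract ((j:ℝ) * (β*γ)) = 2 * Int.fract ((j:ℝ) * β) := by
        have hfl := Int.floor_add_fract ((j:ℝ)*β)
        have e : (j:ℝ) * (β*γ) = ((2 * ⌊(j:ℝ)*β⌋ : ℤ):ℝ) + 2 * Int.fract ((j:ℝ)*β) := by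
          calc (j:ℝ) * (β*γ) = 2 * ((j:ℝ)*β) := by rw [h]; ring
            _ = 2 * ((⌊(j:ℝ)*β⌋:ℝ) + Int.fract ((j:ℝ)*β)) := by rw [hfl]
            _ = ((2 * ⌊(j:ℝ)*β⌋ : ℤ):ℝ) + 2 * Int.fract ((j:ℝ)*β) := by push_cast; ring
        rw [e, Int.fract_intCast_add,
          Int.fract_eq_self.2 ⟨by linarith [Int.fract_nonneg ((j:ℝ)*β)], by linarith [hj.2]⟩]
      have h1 := (hmain j hj0).1
      rw [hb, h] at h1
      linarith
  -- βγ - β is an integer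
  have hδed : ∃ M : ℤ, β * γ - β = (M:ℝ) := by
    by_contra hno
    push_neg at hno
    by_cases hir : ∀ n : ℤ, n ≠ 0 → ∀ m : ℤ, (n:ℝ) * (β*γ - β) ≠ (m:ℝ)
    · -- δ irrational
      have hδirr : Irrational (β*γ - β) := by
        rintro ⟨q, hq⟩
        refine hir (q.den:ℤ) (by exact_mod_cast q.den_nz) q.num ?_
        rw [← hq, Rat.cast_def]
        have hd0 : ((q.den:ℤ):ℝ) ≠ 0 := by
          have : (0:ℝ) < ((q.den:ℤ):ℝ) := by exact_mod_cast q.pos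
          linarith
        push_cast
        push_cast at hd0
        field_simp
      have hI1 : 0 ≤ (γ - 1)/γ := by
        apply div_nonneg (by linarith) (le_of_lt hγ0)
      have hI2 : (γ-1)/γ < 1/γ := by
        rw [div_lt_div_iff₀ hγ0 hγ0]
        nlinarith [hγ0]
      have hI3 : 1/γ ≤ 1 := by rw [div_le_one hγ0]; linarith
      obtain ⟨j, hj0, hj⟩ := exists_fract_mem' (β*γ - β) hδirr 0 ((γ-1)/γ) (1/γ)
        hI1 hI2 hI3 0
      rw [zero_add] at hj
      set a := Int.fract ((j:ℝ) * β) with hadef2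
      set c := Int.fract ((j:ℝ) * (β*γ - β)) with hcdef
      have ha0' : 0 < a := ha j hj0
      have ha1' : a < 1 := Int.fract_lt_one _
      have hc0 : 0 < c := by
        have h0 : 0 < (γ-1)/γ := div_pos (by linarith) hγ0
        linarith [hj.1]
      have hc1 : c < 1 := by
        have := hj.2
        have h0 : 1/γ < 1 := by rw [div_lt_one hγ0]; linarith
        linarith
      have hcγ1 : γ - 1 < c * γ := by
        have h3 := mul_lt_mul_of_pos_right hj.1 hγ0
        rwa [div_mul_cancel₀ _ (ne_of_gt hγ0)] at h3
      have hcγ2 : c * γ < 1 := by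
        have h3 := mul_lt_mul_of_pos_right hj.2 hγ0
        rwa [div_mul_cancel₀ _ (ne_of_gt hγ0)] at h3
      have hbac : Int.fract ((j:ℝ)*(β*γ)) = Int.fract (a + c) := by
        rw [show (j:ℝ)*(β*γ) = (j:ℝ)*β + (j:ℝ)*(β*γ-β) by ring, fract_add_split]
      have hbne := hQ j hj0
      have hacne : a + c ≠ 1 := by
        intro h
        exact hbne (by rw [hbac, h, Int.fract_one])
      rcases lt_or_gt_of_ne hacne with hlt | hgt
      · have hbval : Int.fract ((j:ℝ)*(β*γ)) = a + c := by
          rw [hbac, Int.fract_eq_self.2 ⟨by positivity, hlt⟩]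
        have h1 := (hmain j hj0).1
        rw [hbval] at h1
        nlinarith [h1, hcγ1,
          mul_pos (show (0:ℝ) < 1 - c - a by linarith) (show (0:ℝ) < γ - 1 by linarith)]
      · have hjneg : -j ≠ 0 := neg_ne_zero.2 hj0
        have e1 : ((-j:ℤ):ℝ) * β = -((j:ℝ)*β) := by push_cast; ring
        have e2 : ((-j:ℤ):ℝ) * (β*γ) = -((j:ℝ)*(β*γ)) := by push_cast; ring
        have ha' : Int.fract (((-j:ℤ):ℝ) * β) = 1 - a := by
          rw [e1, Int.fract_neg (ne_of_gt ha0')]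
        have hb' : Int.fract (((-j:ℤ):ℝ) * (β*γ)) = 1 - Int.fract ((j:ℝ)*(β*γ)) := by
          rw [e2, Int.fract_neg hbne]
        have hbval : Int.fract ((j:ℝ)*(β*γ)) = a + c - 1 := by
          rw [hbac, show a + c = (a + c - 1) + ((1:ℤ):ℝ) by push_cast; ring,
            Int.fract_add_intCast, Int.fract_eq_self.2 ⟨by linarith, by linarith⟩]
          push_cast
          ring
        have h1 := (hmain (-j) hjneg).1
        rw [ha', hb', hbval] at h1
        nlinarith [h1, hcγ2,
          mul_pos (show (0:ℝ) < a + c - 1 by linarith) (show (0:ℝ) < γ - 1 by linarith)]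
    · -- δ rational non-integer
      push_neg at hir
      obtain ⟨n₀, hn₀, m, hm⟩ := hir
      have hn₀R : ((n₀:ℤ):ℝ) ≠ 0 := by exact_mod_cast hn₀
      set ρ' : ℚ := (m:ℚ) / (n₀:ℚ) with hρ'def
      have hδq : (ρ' : ℝ) = β*γ - β := by
        rw [hρ'def]
        push_cast
        rw [div_eq_iff hn₀R, ← hm]
        ring
      set u := ρ'.num with hudef
      set v := ρ'.den with hvdef
      have hv1 : 1 ≤ v := ρ'.pos
      have hδuv : β*γ - β = (u:ℝ)/((v:ℤ):ℝ) := by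
        rw [← hδq, Rat.cast_def]
        norm_num [hudef, hvdef]
      have hv2 : 2 ≤ v := by
        by_contra hcv
        push_neg at hcv
        have hv1' : v = 1 := by omega
        apply hno u
        rw [hδuv, hv1']
        norm_num
      have hcop : IsCoprime (u) ((v:ℤ)) := by
        rw [Int.isCoprime_iff_gcd_eq_one]
        simpa [Int.gcd] using ρ'.reduced
      obtain ⟨r, w, hrw⟩ := hcop
      have hvZR : (0:ℝ) < ((v:ℤ):ℝ) := by
        exact_mod_cast (by omega : (0:ℤ) < (v:ℤ))
      have hvinvlt : 1/((v:ℤ):ℝ) < 1 := by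
        rw [div_lt_one hvZR]
        exact_mod_cast (by omega : (1:ℤ) < (v:ℤ))
      have hvinvpos : 0 < 1/((v:ℤ):ℝ) := by positivity
      set ε : ℝ := min (1 - 1/((v:ℤ):ℝ)) (1/(((v:ℤ):ℝ) * (γ - 1))) with hεdef
      have hε0 : 0 < ε := lt_min (by linarith) (div_pos one_pos (mul_pos hvZR (by linarith)))
      have hε1 : ε ≤ 1 := le_trans (min_le_left _ _) (by linarith)
      have hvirr : Irrational (((v:ℤ):ℝ) * β) := hβirr.intCast_mul (by omega)
      obtain ⟨j, hjne, hj⟩ := exists_fract_mem' (((v:ℤ):ℝ)*β) hvirr ((r:ℝ)*β) 0 ε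
        le_rfl hε0 hε1 ((-r)/(v:ℤ))
      set n' : ℤ := r + v*j with hn'def
      have hn'0 : n' ≠ 0 := by
        intro h
        apply hjne
        have : (v:ℤ) * j = -r := by omega
        rw [← this, Int.mul_ediv_cancel_left j (by omega : (v:ℤ) ≠ 0)]
      have han' : Int.fract ((n':ℝ) * β) = Int.fract ((r:ℝ) * β + (j:ℝ) * (((v:ℤ):ℝ) * β)) := by
        congr 1
        push_cast [hn'def]
        ring
      set a := Int.fract ((n':ℝ) * β) with hadef3
      have haε : a < ε := by rw [han']; exact hj.2
      have ha0'' : 0 < a := ha n' hn'0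
      have hcval : Int.fract ((n':ℝ) * (β*γ - β)) = 1/((v:ℤ):ℝ) := by
        have hrwR : (r:ℝ) * (u:ℝ) + (w:ℝ) * ((v:ℤ):ℝ) = 1 := by
          exact_mod_cast congrArg (fun z : ℤ => (z:ℝ)) hrw
        have e : (n':ℝ) * (β*γ - β) = ((1 + v * (j*u - w) : ℤ):ℝ) / ((v:ℤ):ℝ) := by
          rw [hδuv]
          push_cast [hn'def]
          field_simp
          push_cast
          linear_combination hrwR
        rw [e, fract_unit (v:ℤ) (by omega) _]
      have hbval : Int.fract ((n':ℝ) * (β*γ)) = a + 1/((v:ℤ):ℝ) := by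
        rw [show (n':ℝ)*(β*γ) = (n':ℝ)*β + (n':ℝ)*(β*γ-β) by ring, fract_add_split,
          hcval]
        have hsum : a + 1/((v:ℤ):ℝ) < 1 := by
          have := min_le_left (1 - 1/((v:ℤ):ℝ)) (1/(((v:ℤ):ℝ) * (γ - 1)))
          linarith
        rw [Int.fract_eq_self.2 ⟨by positivity, hsum⟩]
      have h1 := (hmain n' hn'0).1
      rw [hbval] at h1
      -- 1/v < a(γ-1) but a(γ-1) < ε(γ-1) ≤ 1/v
      have hεle : ε ≤ 1/(((v:ℤ):ℝ) * (γ - 1)) := min_le_right _ _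
      have hfin : a * (γ - 1) < 1/((v:ℤ):ℝ) := by
        have h4 : a * (γ-1) < ε * (γ-1) := by
          apply mul_lt_mul_of_pos_right haε (by linarith)
        have h5 : ε * (γ-1) ≤ (1/(((v:ℤ):ℝ) * (γ - 1))) * (γ-1) := by
          apply mul_le_mul_of_nonneg_right hεle (by linarith)
        have h6 : (1/(((v:ℤ):ℝ) * (γ - 1))) * (γ-1) = 1/((v:ℤ):ℝ) := by
          rw [div_mul_eq_mul_div, one_mul,
            div_eq_div_iff (mul_pos hvZR (by linarith : (0:ℝ) < γ - 1)).ne' (ne_of_gt hvZR)]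
          ring
        linarith
      nlinarith [h1, hfin]
  -- conclusion
  obtain ⟨M, hM⟩ := hδed
  refine ⟨M, by rw [hβγ]; linarith [hM], ?_, ?_⟩
  · have h0 : (0:ℝ) < (M:ℝ) := by
      rw [← hM]
      nlinarith [hβ0, hγ1]
    have h1 : (0:ℤ) < M := by exact_mod_cast h0
    exact_mod_cast h1
  · have hk0 : (k:ℝ) ≠ 0 := by positivity
    have h2l : ((2:ℝ) ^ ((l:ℝ)/(k:ℝ))) ^ k = 2 ^ l := by
      rw [← Real.rpow_natCast ((2:ℝ) ^ ((l:ℝ)/(k:ℝ))) k, ← Real.rpow_mul (by norm_num),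
        div_mul_cancel₀ _ hk0, Real.rpow_natCast]
    have h2pos : (0:ℝ) < (2:ℝ) ^ ((l:ℝ)/(k:ℝ)) := Real.rpow_pos_of_pos two_pos _
    have hβlt : β < (2:ℝ) ^ ((l:ℝ)/(k:ℝ)) := by
      have hpow : β ^ k < ((2:ℝ) ^ ((l:ℝ)/(k:ℝ))) ^ k := by
        rw [h2l, hβdef, ← pow_mul, Nat.mul_comm, pow_mul, ← hγdef]
        exact pow_lt_pow_left₀ hγ2 (by positivity) (by omega)
      exact lt_of_pow_lt_pow_left₀ k (le_of_lt h2pos) hpow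
    rw [← hM]
    nlinarith [hβlt, mul_pos hβ0 (show (0:ℝ) < 2 - γ by linarith)]

theorem stmt_3 (l k : ℕ) (hl : 1 ≤ l) (hk : 1 ≤ k) (α : ℝ) (hα : 0 < α) :
    (∃ M : ℤ, α ^ (l + k) - α ^ l = (M : ℝ) ∧ 1 ≤ (M : ℝ) ∧
        (M : ℝ) < (2 : ℝ) ^ ((l : ℝ) / (k : ℝ))) ↔
      (∀ n : ℤ, n ≠ 0 →
        ⌊(⌊(n : ℝ) * α ^ l⌋ : ℝ) * α ^ k⌋ + 1 = ⌊(n : ℝ) * α ^ (l + k)⌋) := by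
  constructor
  · rintro ⟨M, h1, h2, h3⟩
    exact fwd l k hl hk α hα M h1 h2 h3
  · intro H
    exact bwd l k hl hk α hα H
end

section
/- Let l, k be positive integers and α a positive real number such that α^(l+k) − α^l is an integer in [1, 2^(l/k)). Then ⌊⌊nα^l⌋·α^k⌋ + 1 = ⌊n·α^(l+k)⌋ for all nonzero integers n. -/
open Polynomial in
theorem stmt_4 (l k : ℕ) (hl : 1 ≤ l) (hk : 1 ≤ k) (α : ℝ) (hα : 0 < α)
    (M : ℤ) (hM : α ^ (l + k) - α ^ l = (M : ℝ))
    (hM1 : 1 ≤ (M : ℝ)) (hM2 : (M : ℝ) < (2 : ℝ) ^ ((l : ℝ) / (k : ℝ))) :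
    ∀ n : ℤ, n ≠ 0 →
      ⌊(⌊(n : ℝ) * α ^ l⌋ : ℝ) * α ^ k⌋ + 1 = ⌊(n : ℝ) * α ^ (l + k)⌋ := by
  have hαl : (0:ℝ) < α ^ l := pow_pos hα l
  have hαk : (0:ℝ) < α ^ k := pow_pos hα k
  -- α > 1
  have hα1 : 1 < α := by
    by_contra h
    push_neg at h
    have h1 : α ^ (l + k) ≤ 1 := pow_le_one₀ hα.le h
    nlinarith
  have hαk1 : 1 < α ^ k := one_lt_pow₀ hα1 (by omega)
  have hαl1 : 1 < α ^ l := one_lt_pow₀ hα1 (by omega)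
  -- α^k < 2
  have hαk2 : α ^ k < 2 := by
    by_contra h
    push_neg at h
    have hkR : (0:ℝ) < (k:ℝ) := by positivity
    have h1 : (2:ℝ) ^ ((l:ℝ)/(k:ℝ)) ≤ (α ^ k) ^ ((l:ℝ)/(k:ℝ)) :=
      Real.rpow_le_rpow (by norm_num) h (by positivity)
    have h2 : (α ^ k : ℝ) ^ ((l:ℝ)/(k:ℝ)) = α ^ l := by
      rw [← Real.rpow_natCast α k, ← Real.rpow_mul hα.le, ← Real.rpow_natCast α l]
      congr 1
      field_simp
    rw [h2] at h1
    have h3 : (M:ℝ) = α ^ l * (α ^ k - 1) := by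
      rw [← hM, pow_add]; ring
    nlinarith
  -- α is integral over ℤ
  have hint : IsIntegral ℤ α := by
    refine ⟨X ^ (l + k) - (X ^ l + C M), ?_, ?_⟩
    · apply monic_X_pow_sub
      apply lt_of_le_of_lt (degree_add_le _ _)
      refine max_lt ?_ ?_
      · rw [degree_X_pow]; exact_mod_cast by omega
      · exact lt_of_le_of_lt degree_C_le (by exact_mod_cast Nat.pos_of_ne_zero (by omega))
    · simp only [eval₂_sub, eval₂_add, eval₂_X_pow, eval₂_C, algebraMap_int_eq, Int.coe_castRingHom]
      linarith [hM]
  -- n * α^l is never an integer for n ≠ 0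
  have hirr : ∀ n : ℤ, n ≠ 0 → ∀ m : ℤ, (n:ℝ) * α ^ l ≠ (m:ℝ) := by
    intro n hn m hnm
    have hnR : (n:ℝ) ≠ 0 := Int.cast_ne_zero.mpr hn
    have hαlq : α ^ l = ((m:ℝ)/(n:ℝ)) := by field_simp at hnm ⊢; linarith
    have hm0 : (m:ℝ) ≠ 0 := by
      intro h
      rw [h] at hαlq
      simp at hαlq
      linarith
    -- α^k = (m + M*n)/m
    have hαkq : α ^ k = (((m + M*n : ℤ)):ℝ) / ((m:ℤ):ℝ) := by
      have h3 : α ^ l * α ^ k = α ^ l + (M:ℝ) := by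
        rw [← pow_add]; linarith
      rw [hαlq] at h3
      field_simp at h3 ⊢
      push_cast; linear_combination h3
    set q : ℚ := ((m + M*n : ℤ):ℚ) / ((m:ℤ):ℚ) with hq
    have hcast : ((q:ℚ):ℝ) = α ^ k := by
      rw [hαkq, hq]; push_cast; ring
    have hqint : IsIntegral ℤ q := by
      rw [← isIntegral_algebraMap_iff (algebraMap ℚ ℝ).injective]
      have : algebraMap ℚ ℝ q = α ^ k := by
        rw [show algebraMap ℚ ℝ q = ((q:ℚ):ℝ) from rfl, hcast]
      rw [this]
      exact hint.pow k
    obtain ⟨z, hz⟩ := IsIntegrallyClosed.isIntegral_iff.mp hqint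
    have hzR : ((z:ℤ):ℝ) = α ^ k := by
      rw [← hcast, ← hz]; simp
    have h1z : (1:ℝ) < (z:ℝ) := by rw [hzR]; exact hαk1
    have h2z : ((z:ℤ):ℝ) < 2 := by rw [hzR]; exact hαk2
    have : (1:ℤ) < z := by exact_mod_cast h1z
    have : z < 2 := by exact_mod_cast h2z
    omega
  intro n hn
  set N : ℤ := ⌊(n:ℝ) * α ^ l⌋ with hN
  set f : ℝ := Int.fract ((n:ℝ) * α ^ l) with hf
  have hNf : (N:ℝ) = (n:ℝ) * α ^ l - f := by rw [hf, Int.self_sub_fract]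
  have hf0 : 0 < f := by
    rcases lt_or_eq_of_le (Int.fract_nonneg ((n:ℝ) * α ^ l)) with h | h
    · exact h
    · exfalso
      have hfz : f = 0 := by rw [hf, ← h]
      exact hirr n hn N (by rw [hNf, hfz]; ring)
  have hf1 : f < 1 := Int.fract_lt_one _
  -- RHS
  have hrhs : ⌊(n:ℝ) * α ^ (l + k)⌋ = N + n * M := by
    have : (n:ℝ) * α ^ (l + k) = (n:ℝ) * α ^ l + ((n * M : ℤ):ℝ) := by
      push_cast
      rw [show α ^ (l + k) = α ^ l + (M:ℝ) by linarith]
      ring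
    rw [this, Int.floor_add_intCast, hN]
  -- LHS
  have hlhs : ⌊(N:ℝ) * α ^ k⌋ = N + n * M - 1 := by
    have hexp : (N:ℝ) * α ^ k = ((N + n * M : ℤ):ℝ) - f * (α ^ k - 1) := by
      have hNak : (N:ℝ) * α ^ k = (n:ℝ) * α ^ (l + k) - f * α ^ k := by
        rw [hNf, pow_add]; ring
      have h2 : (n:ℝ) * α ^ (l + k) = (n:ℝ) * α ^ l + (n:ℝ) * (M:ℝ) := by
        rw [show α ^ (l + k) = α ^ l + (M:ℝ) by linarith]
        ring
      push_cast
      rw [hNak, h2, hNf]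
      ring
    rw [hexp]
    have hprod0 : 0 < f * (α ^ k - 1) := mul_pos hf0 (by linarith)
    have hprod1 : f * (α ^ k - 1) < 1 := by nlinarith
    rw [Int.floor_eq_iff]
    constructor
    · push_cast; linarith
    · push_cast; linarith
  rw [hlhs, hrhs]
  ring
end

section
/- Let l, k be positive integers and α a real number with α^l and α^k both rational. Write α^l = p/q and α^k = p'/q' in lowest terms with q, q' positive. Then gcd(q, q') ≠ 1 unless q = q' = 1. -/
theorem stmt_5 (l k : ℕ) (hl : 1 ≤ l) (hk : 1 ≤ k) (α : ℝ)
    (p p' : ℤ) (q q' : ℕ) (hq : 0 < q) (hq' : 0 < q')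
    (hpl : α ^ l = (p : ℝ) / (q : ℝ)) (hpk : α ^ k = (p' : ℝ) / (q' : ℝ))
    (hcop : Nat.Coprime p.natAbs q) (hcop' : Nat.Coprime p'.natAbs q') :
    Nat.gcd q q' ≠ 1 ∨ (q = 1 ∧ q' = 1) := by
  by_cases h : Nat.gcd q q' = 1
  · right
    have hq0 : (q : ℝ) ≠ 0 := Nat.cast_ne_zero.mpr hq.ne'
    have hq0' : (q' : ℝ) ≠ 0 := Nat.cast_ne_zero.mpr hq'.ne'
    have key : (p : ℝ) ^ k * (q' : ℝ) ^ l = (p' : ℝ) ^ l * (q : ℝ) ^ k := by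
      have h1 : ((p : ℝ) / q) ^ k = ((p' : ℝ) / q') ^ l := by
        rw [← hpl, ← hpk, ← pow_mul, ← pow_mul, Nat.mul_comm]
      rw [div_pow, div_pow, div_eq_div_iff (pow_ne_zero _ hq0) (pow_ne_zero _ hq0')] at h1
      linarith [h1]
    have keyZ : p ^ k * (q' : ℤ) ^ l = p' ^ l * (q : ℤ) ^ k := by exact_mod_cast key
    have keyN : p.natAbs ^ k * q' ^ l = p'.natAbs ^ l * q ^ k := by
      have := congrArg Int.natAbs keyZ
      simpa [Int.natAbs_mul, Int.natAbs_pow] using this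
    have hcopqq' : Nat.Coprime q q' := h
    have hd : q ^ k ∣ q' ^ l := by
      have hdvd : q ^ k ∣ p.natAbs ^ k * q' ^ l := by
        rw [keyN]; exact Dvd.intro_left _ rfl
      exact (hcop.symm.pow k k).dvd_of_dvd_mul_left hdvd
    have hd' : q' ^ l ∣ q ^ k := by
      have hdvd : q' ^ l ∣ p'.natAbs ^ l * q ^ k := by
        rw [← keyN]; exact Dvd.intro_left _ rfl
      exact (hcop'.symm.pow l l).dvd_of_dvd_mul_left hdvd
    have h1 : q ^ k = 1 :=
      Nat.Coprime.eq_one_of_dvd (hcopqq'.pow k l) hd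
    have h2 : q' ^ l = 1 :=
      Nat.Coprime.eq_one_of_dvd (hcopqq'.symm.pow l k) hd'
    have e1 : q = 1 := Nat.dvd_one.mp (h1 ▸ dvd_pow_self q (by omega : k ≠ 0))
    have e2 : q' = 1 := Nat.dvd_one.mp (h2 ▸ dvd_pow_self q' (by omega : l ≠ 0))
    exact ⟨e1, e2⟩
  · left; exact h
end

section
/- Let l, k be positive integers and α a positive real number such that α^(l+k) − α^l is an integer in [1, 2^(l/k)). Then neither α^l nor α^k is rational. -/
/-!
Put `A = α ^ l` and `B = α ^ k`, so that `A * (B - 1) = M` and `A ^ k = B ^ l`. Then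
`B ^ l * (B - 1) ^ k = M ^ k`, so `B` is an algebraic integer; if it were rational it would be an
integer `n ≥ 2`, whence `A ^ k = n ^ l ≥ 2 ^ l` and `M = A * (n - 1) ≥ A ≥ 2 ^ (l / k)`, which is
excluded. Finally `α ^ l = M / (α ^ k - 1)` is irrational along with `α ^ k`.
-/

open Polynomial

theorem isIntegral_of_pow_mul_sub_one_pow_eq {R S : Type*} [CommRing R] [Nontrivial R]
    [CommRing S] [Algebra R S] {x : S} {l k : ℕ} (hlk : l + k ≠ 0) {m : R}
    (h : x ^ l * (x - 1) ^ k = algebraMap R S m) : IsIntegral R x := by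
  have hmonic : (X ^ l * (X - C 1) ^ k : R[X]).Monic :=
    (monic_X_pow l).mul ((monic_X_sub_C 1).pow k)
  refine ⟨X ^ l * (X - C 1) ^ k - C m, hmonic.sub_of_left ?_, by simp [h]⟩
  refine degree_C_le.trans_lt ?_
  rw [← natDegree_pos_iff_degree_pos, (monic_X_pow l).natDegree_mul ((monic_X_sub_C 1).pow k),
    (monic_X_sub_C 1).natDegree_pow, natDegree_X_pow, natDegree_X_sub_C]
  omega

theorem Rat.exists_intCast_eq_of_pow_mul_sub_one_pow_eq {q : ℚ} {l k : ℕ} (hlk : l + k ≠ 0)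
    {m : ℤ} (h : q ^ l * (q - 1) ^ k = m) : ∃ n : ℤ, (n : ℚ) = q :=
  IsIntegrallyClosed.algebraMap_eq_of_integral (isIntegral_of_pow_mul_sub_one_pow_eq hlk h)

theorem Real.rpow_div_natCast_le_of_pow_le {x y : ℝ} (hx : 0 ≤ x) (hy : 0 ≤ y) {l k : ℕ}
    (hk : k ≠ 0) (h : x ^ l ≤ y ^ k) : x ^ ((l : ℝ) / k) ≤ y := by
  rw [div_eq_mul_inv, Real.rpow_natCast_mul hx,
    Real.rpow_inv_le_iff_of_pos (by positivity) hy (by positivity)]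
  exact_mod_cast h

theorem irrational_of_mul_sub_one_eq_of_pow_eq {A B : ℝ} {l k : ℕ} {M : ℤ} (hk : k ≠ 0)
    (hA : 0 < A) (hM : 0 < M) (hAB : A * (B - 1) = M) (hpow : A ^ k = B ^ l)
    (hM2 : (M : ℝ) < 2 ^ ((l : ℝ) / k)) : Irrational B := by
  rintro ⟨q, rfl⟩
  obtain ⟨n, rfl⟩ : ∃ n : ℤ, (n : ℚ) = q := by
    refine Rat.exists_intCast_eq_of_pow_mul_sub_one_pow_eq (l := l) (k := k) (m := M ^ k)
      (by omega) ?_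
    exact_mod_cast (by rw [← hpow, ← mul_pow, hAB] : ((q : ℝ) ^ l * (q - 1) ^ k) = (M : ℝ) ^ k)
  push_cast at hAB hpow
  have hn : (1 : ℤ) < n := by
    have : (0 : ℝ) < n - 1 := pos_of_mul_pos_right (hAB ▸ Int.cast_pos.mpr hM) hA.le
    exact_mod_cast sub_pos.mp this
  have hn2 : (2 : ℝ) ≤ n := by exact_mod_cast hn
  have hA2 : (2 : ℝ) ^ ((l : ℝ) / k) ≤ A :=
    Real.rpow_div_natCast_le_of_pow_le (by norm_num) hA.le hk
      (hpow ▸ pow_le_pow_left₀ (by norm_num) hn2 l)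
  have : A ≤ M := by
    rw [← hAB]
    exact le_mul_of_one_le_right hA.le (by linarith)
  linarith

theorem stmt_6_general (l k : ℕ) (hk : 1 ≤ k) (α : ℝ) (hα : 0 < α)
    (M : ℤ) (hM : α ^ (l + k) - α ^ l = (M : ℝ))
    (hM1 : 1 ≤ (M : ℝ)) (hM2 : (M : ℝ) < (2 : ℝ) ^ ((l : ℝ) / (k : ℝ))) :
    Irrational (α ^ l) ∧ Irrational (α ^ k) := by
  have hA : 0 < α ^ l := pow_pos hα l
  have hAB : α ^ l * (α ^ k - 1) = M := by rw [← hM, pow_add]; ring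
  have hpow : (α ^ l) ^ k = (α ^ k) ^ l := by rw [← pow_mul, ← pow_mul, mul_comm]
  have hB : Irrational (α ^ k) :=
    irrational_of_mul_sub_one_eq_of_pow_eq (by omega) hA (by exact_mod_cast hM1) hAB hpow hM2
  refine ⟨Irrational.of_intCast_div M ?_, hB⟩
  rw [← hAB, mul_div_cancel_left₀ _ hA.ne']
  simpa using hB.sub_intCast 1

theorem stmt_6 (l k : ℕ) (hl : 1 ≤ l) (hk : 1 ≤ k) (α : ℝ) (hα : 0 < α)
    (M : ℤ) (hM : α ^ (l + k) - α ^ l = (M : ℝ))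
    (hM1 : 1 ≤ (M : ℝ)) (hM2 : (M : ℝ) < (2 : ℝ) ^ ((l : ℝ) / (k : ℝ))) :
    Irrational (α ^ l) ∧ Irrational (α ^ k) :=
  stmt_6_general l k hk α hα M hM hM1 hM2
end

section
/- Let l, k be positive integers and α a positive real number with α^l irrational and α^(l+k) − α^l an integer M with 1 ≤ M < 2^(l/k). Then for every nonzero integer n, 0 < {nα^l}·(α^k − 1) < 1, where {x} denotes the fractional part. -/
theorem stmt_8 (l k : ℕ) (hl : 1 ≤ l) (hk : 1 ≤ k) (α : ℝ) (hα : 0 < α)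
    (hirr : Irrational (α ^ l))
    (M : ℤ) (hM : α ^ (l + k) - α ^ l = (M : ℝ))
    (hM1 : 1 ≤ (M : ℝ)) (hM2 : (M : ℝ) < (2 : ℝ) ^ ((l : ℝ) / (k : ℝ))) :
    ∀ n : ℤ, n ≠ 0 →
      0 < Int.fract ((n : ℝ) * α ^ l) * (α ^ k - 1) ∧
        Int.fract ((n : ℝ) * α ^ l) * (α ^ k - 1) < 1 := by
  intro n hn
  have hx : (0:ℝ) < α ^ l := pow_pos hα l
  have hkey : α ^ l * (α ^ k - 1) = (M:ℝ) := by
    rw [pow_add] at hM; ring_nf; ring_nf at hM; linarith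
  have hak : (1:ℝ) < α ^ k := by nlinarith
  have hxM : (M:ℝ) < α ^ l := by
    by_contra h
    push_neg at h
    have h2 : (2:ℝ) ≤ α ^ k := by nlinarith
    have h2l : (2:ℝ)^l ≤ (α^l)^k := by
      calc (2:ℝ)^l ≤ (α^k)^l := pow_le_pow_left₀ (by norm_num) h2 l
        _ = (α^l)^k := by rw [← pow_mul, ← pow_mul, Nat.mul_comm]
    have hcon : (2:ℝ)^((l:ℝ)/(k:ℝ)) ≤ α ^ l := by
      by_contra hc
      push_neg at hc
      have hk0 : (0:ℝ) < (k:ℝ) := by exact_mod_cast hk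
      have hlt := Real.rpow_lt_rpow (le_of_lt hx) hc hk0
      rw [← Real.rpow_mul (by norm_num), div_mul_cancel₀ _ (ne_of_gt hk0),
        Real.rpow_natCast, Real.rpow_natCast] at hlt
      linarith
    linarith
  have hirr_n : Irrational ((n:ℝ) * α ^ l) := hirr.intCast_mul hn
  have hfpos : 0 < Int.fract ((n:ℝ) * α ^ l) := by
    rw [Int.fract_pos]
    intro hcontra
    exact hirr_n.ne_int ⌊(n:ℝ) * α ^ l⌋ hcontra
  have hflt : Int.fract ((n:ℝ) * α ^ l) < 1 := Int.fract_lt_one _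
  refine ⟨mul_pos hfpos (by linarith), ?_⟩
  have h1 : α ^ k - 1 < 1 := by nlinarith
  nlinarith
end

section
/- Let l, k be positive integers and α a real number with 0 < α < 2^(1/k), α ≠ 1, such that α^(l+k) − α^l is an integer in [1, 2^(l/k)). Then for every δ with α^k − 1 ≤ δ < 1, the identity ⌊⌊nα^l⌋·α^k + δ⌋ = ⌊nα^(l+k)⌋ holds for all integers n. -/
/-! Write `f` for the fractional part of `x`. If `x * (c - 1) = m` is an integer, then
`⌊x⌋ * c + δ = ⌊x⌋ + m + (δ - f * (c - 1))`, and the last summand lies in `[0, 1)` as soon as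
`c - 1 ≤ δ < 1`. For the theorem take `x = n * α ^ l`, `c = α ^ k` and `m = n * M`. -/

theorem floor_floor_mul_add_eq_floor_mul {x c δ : ℝ} {m : ℤ} (hc : 1 ≤ c)
    (hm : x * (c - 1) = m) (hδ : c - 1 ≤ δ) (hδ' : δ < 1) :
    ⌊(⌊x⌋ : ℝ) * c + δ⌋ = ⌊x * c⌋ := by
  have hxc : x * c = x + m := by linarith
  have hsplit : (⌊x⌋ : ℝ) * c + δ = ((⌊x⌋ + m : ℤ) : ℝ) + (δ - Int.fract x * (c - 1)) := by
    push_cast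
    linear_combination (c - 1) * Int.floor_add_fract x + hm
  have hf := Int.fract_nonneg x
  have hf' := Int.fract_lt_one x
  have hrem : ⌊δ - Int.fract x * (c - 1)⌋ = 0 := by
    rw [Int.floor_eq_zero_iff]
    constructor <;> nlinarith
  rw [hsplit, Int.floor_intCast_add, hrem, hxc, Int.floor_add_intCast, add_zero]

theorem stmt_11_general (l k : ℕ) (α : ℝ)
    (hα : 0 < α)
    (M : ℤ) (hM : α ^ (l + k) - α ^ l = (M : ℝ))
    (hM1 : 1 ≤ (M : ℝ)) :
    ∀ δ : ℝ, α ^ k - 1 ≤ δ → δ < 1 →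
      ∀ n : ℤ, ⌊(⌊(n : ℝ) * α ^ l⌋ : ℝ) * α ^ k + δ⌋ = ⌊(n : ℝ) * α ^ (l + k)⌋ := by
  intro δ hδ hδ' n
  have hM' : α ^ l * (α ^ k - 1) = M := by rw [← hM, pow_add]; ring
  have hαk : 1 ≤ α ^ k := by
    have := pos_of_mul_pos_right (hM' ▸ one_pos.trans_le hM1) (pow_pos hα l).le
    linarith
  have hm : (n * α ^ l) * (α ^ k - 1) = ((n * M : ℤ) : ℝ) := by
    push_cast; rw [← hM']; ring
  rw [floor_floor_mul_add_eq_floor_mul hαk hm hδ hδ', pow_add, mul_assoc]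

theorem stmt_11 (l k : ℕ) (hl : 1 ≤ l) (hk : 1 ≤ k) (α : ℝ)
    (hα : 0 < α) (hα1 : α ≠ 1) (hα2 : α < (2 : ℝ) ^ ((1 : ℝ) / (k : ℝ)))
    (M : ℤ) (hM : α ^ (l + k) - α ^ l = (M : ℝ))
    (hM1 : 1 ≤ (M : ℝ)) (hM2 : (M : ℝ) < (2 : ℝ) ^ ((l : ℝ) / (k : ℝ))) :
    ∀ δ : ℝ, α ^ k - 1 ≤ δ → δ < 1 →
      ∀ n : ℤ, ⌊(⌊(n : ℝ) * α ^ l⌋ : ℝ) * α ^ k + δ⌋ = ⌊(n : ℝ) * α ^ (l + k)⌋ :=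
  stmt_11_general l k α hα M hM hM1
end

section
/- Let m be a positive integer, α > 1 an irrational real number, and β a real number with β − mα an integer in [1, α). Then ⌊nβ⌋ − ⌊⌊nα⌋·(β/α)⌋ = ⌊nmα⌋ + 1 − m⌊nα⌋ for all nonzero integers n. -/
theorem stmt_15 (m : ℕ) (hm : 1 ≤ m) (α : ℝ) (hα : 1 < α) (hirr : Irrational α)
    (β : ℝ) (M : ℤ) (hM : β - (m : ℝ) * α = (M : ℝ))
    (hM1 : 1 ≤ (M : ℝ)) (hM2 : (M : ℝ) < α) :
    ∀ n : ℤ, n ≠ 0 →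
      ⌊(n : ℝ) * β⌋ - ⌊(⌊(n : ℝ) * α⌋ : ℝ) * (β / α)⌋ =
        ⌊(n : ℝ) * (m : ℝ) * α⌋ + 1 - (m : ℤ) * ⌊(n : ℝ) * α⌋ := by
  intro n hn
  have hα0 : (0:ℝ) < α := lt_trans one_pos hα
  have hβ : β = (m:ℝ)*α + (M:ℝ) := by linarith
  have hirr' : Irrational ((n:ℝ)*α) := by
    simpa [mul_comm] using hirr.intCast_mul hn
  set A := ⌊(n:ℝ)*α⌋ with hA
  set f := Int.fract ((n:ℝ)*α) with hf
  have hAr : (A:ℝ) = (n:ℝ)*α - f := by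
    rw [hA, hf, ← Int.self_sub_fract]
  have hf0 : 0 < f := by
    rw [hf, Int.fract_pos]
    intro h
    exact hirr'.ne_int A (by rw [hA, ← h])
  have hf1 : f < 1 := Int.fract_lt_one _
  have h1 : ⌊(n:ℝ)*β⌋ = ⌊(n:ℝ)*(m:ℝ)*α⌋ + n*M := by
    have he : (n:ℝ)*β = (n:ℝ)*(m:ℝ)*α + ((n*M : ℤ):ℝ) := by
      push_cast; rw [hβ]; ring
    rw [he, Int.floor_add_intCast]
  have h2 : ⌊(A:ℝ)*(β/α)⌋ = A * m + (n*M - 1) := by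
    have he : (A:ℝ)*(β/α) = ((A*m : ℤ):ℝ) + (((n*M : ℤ):ℝ) + (-(f*(M:ℝ)/α))) := by
      rw [hβ, hAr]
      push_cast
      field_simp
      linear_combination (-(α*(m:ℝ))) * hAr
    rw [he, Int.floor_intCast_add, Int.floor_intCast_add]
    have hfl : ⌊-(f*(M:ℝ)/α)⌋ = -1 := by
      have hlt : f*(M:ℝ)/α < 1 := by
        rw [div_lt_one hα0]; nlinarith
      have hpos : 0 < f*(M:ℝ)/α := div_pos (mul_pos hf0 (by linarith)) hα0
      rw [Int.floor_eq_iff]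
      constructor <;> push_cast <;> linarith
    rw [hfl]; ring
  rw [h1, h2]; ring
end

section
/- Let m be a positive integer and α, β positive real numbers such that ⌊nβ⌋ − ⌊⌊nα⌋·(β/α)⌋ = ⌊nmα⌋ + 1 − m⌊nα⌋ holds for all nonzero integers n. Then α is irrational. -/
theorem stmt_17 (m : ℕ) (hm : 1 ≤ m) (α β : ℝ) (hα : 0 < α) (hβ : 0 < β)
    (hid : ∀ n : ℤ, n ≠ 0 →
      ⌊(n : ℝ) * β⌋ - ⌊(⌊(n : ℝ) * α⌋ : ℝ) * (β / α)⌋ =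
        ⌊(n : ℝ) * (m : ℝ) * α⌋ + 1 - (m : ℤ) * ⌊(n : ℝ) * α⌋) :
    Irrational α := by
  rw [Irrational]
  rintro ⟨r, hr⟩
  have hα0 : α ≠ 0 := ne_of_gt hα
  set n : ℤ := (r.den : ℤ) with hn
  have hn0 : n ≠ 0 := by
    simp [hn, r.den_nz]
  have hdne : ((r.den : ℝ)) ≠ 0 := by
    exact_mod_cast r.den_nz
  have hna : (n : ℝ) * α = (r.num : ℝ) := by
    rw [← hr, hn, Rat.cast_def]
    push_cast
    field_simp
  have h1 := hid n hn0
  have hfloor : ⌊(n : ℝ) * α⌋ = r.num := by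
    rw [hna, Int.floor_intCast]
  have hmid : (⌊(n : ℝ) * α⌋ : ℝ) * (β / α) = (n : ℝ) * β := by
    rw [hfloor, ← hna]
    field_simp
  have hm2 : (n : ℝ) * (m : ℝ) * α = ((m * r.num : ℤ) : ℝ) := by
    push_cast
    rw [mul_comm (n : ℝ) (m : ℝ), mul_assoc, hna]
  rw [hmid, hfloor, hm2, Int.floor_intCast] at h1
  omega
end
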